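/- arXiv:2512.07499 — 9 statements merged into one kernel-verified Lean document; each statement's English description precedes it below -/
import Mathlib

section
/- The map sending a ∈ A(n) to the set {i ∈ [n] : a_i = i} is a bijection from A(n) onto the collection of subsets of [n] that contain n. -/
/-- The map `a ↦ {i : a i = i}` is a bijection from `A(n)` onto the
collection of subsets of `[n]` containing the largest element `n`.
(Indices encoded by `Fin n`; the element `n` corresponds to `n-1 : Fin n`.) -/
theorem stmt1 (n : ℕ) (hn : 1 ≤ n) :
    Set.BijOn (fun a : Fin n → Fin n => {i : Fin n | a i = i})
      {a : Fin n → Fin n |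
        (∀ i, i ≤ a i) ∧ ∀ i m : Fin n, i ≤ m → m ≤ a i → a m = a i}
      {S : Set (Fin n) | (⟨n - 1, by omega⟩ : Fin n) ∈ S} := by
  classical
  set top : Fin n := ⟨n - 1, by omega⟩ with htopdef
  have htop : ∀ i : Fin n, i ≤ top := by
    intro i
    have := i.isLt
    simp only [htopdef, Fin.le_def]
    omega
  have key : ∀ a : Fin n → Fin n,
      ((∀ i, i ≤ a i) ∧ ∀ i m : Fin n, i ≤ m → m ≤ a i → a m = a i) →
      ∀ i j : Fin n, i ≤ j → a j = j → a i ≤ j := by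
    intro a ⟨h1, h2⟩ i j hij hj
    by_contra h
    push_neg at h
    have := h2 i j hij (le_of_lt h)
    rw [hj] at this
    exact absurd this (ne_of_lt h)
  have fix : ∀ a : Fin n → Fin n,
      ((∀ i, i ≤ a i) ∧ ∀ i m : Fin n, i ≤ m → m ≤ a i → a m = a i) →
      ∀ i, a (a i) = a i := by
    intro a ⟨h1, h2⟩ i
    exact h2 i (a i) (h1 i) le_rfl
  refine ⟨?_, ?_, ?_⟩
  · intro a ha
    simp only [Set.mem_setOf_eq]
    exact le_antisymm (htop _) (ha.1 top)
  · intro a ha b hb hab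
    funext i
    simp only [Set.ext_iff, Set.mem_setOf_eq] at hab
    have h1 : b i ≤ a i := key b hb i (a i) (ha.1 i) ((hab (a i)).mp (fix a ha i))
    have h2 : a i ≤ b i := key a ha i (b i) (hb.1 i) ((hab (b i)).mpr (fix b hb i))
    exact le_antisymm h2 h1
  · intro S hS
    simp only [Set.mem_setOf_eq] at hS
    set F : Fin n → Finset (Fin n) :=
      fun i => Finset.univ.filter (fun s => s ∈ S ∧ i ≤ s) with hF
    have hne : ∀ i, (F i).Nonempty := fun i => ⟨top, by simp [hF, hS, htop i]⟩
    set a : Fin n → Fin n := fun i => (F i).min' (hne i) with ha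
    have hmem : ∀ i, a i ∈ S ∧ i ≤ a i := by
      intro i
      have := (F i).min'_mem (hne i)
      exact (Finset.mem_filter.mp this).2
    have hmin : ∀ i s, s ∈ S → i ≤ s → a i ≤ s := by
      intro i s hs his
      exact (F i).min'_le s (by simp [hF, hs, his])
    refine ⟨a, ⟨fun i => (hmem i).2, ?_⟩, ?_⟩
    · intro i m him hm
      have h1 : a m ≤ a i := hmin m (a i) (hmem i).1 hm
      have h2 : a i ≤ a m := hmin i (a m) (hmem m).1 (le_trans him (hmem m).2)
      exact le_antisymm h1 h2
    · ext i
      simp only [Set.mem_setOf_eq]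
      constructor
      · intro h; rw [← h]; exact (hmem i).1
      · intro h; exact le_antisymm (hmin i i h le_rfl) (hmem i).2
end

section
/- For n, k ≥ 1, the number of k-tuples (a^(1),…,a^(k)) of elements of A(n) with a^(k) ≤ a^(k-1) ≤ … ≤ a^(1) componentwise equals (k+1)^(n-1). -/
open scoped Classical

namespace Stmt2Aux

lemma card_filter_le_val (k a : ℕ) :
    (Finset.univ.filter (fun j : Fin k => a ≤ j.val)).card = k - a := by
  have h1 : ((Finset.univ.filter (fun j : Fin k => a ≤ j.val)).image Fin.val)
      = Finset.Ico a k := by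
    ext x
    simp only [Finset.mem_image, Finset.mem_filter, Finset.mem_univ, true_and,
      Finset.mem_Ico]
    constructor
    · rintro ⟨j, hj, rfl⟩; exact ⟨hj, j.isLt⟩
    · rintro ⟨h1, h2⟩; exact ⟨⟨x, h2⟩, h1, rfl⟩
  have h2 := Finset.card_image_of_injective
      (Finset.univ.filter (fun j : Fin k => a ≤ j.val)) Fin.val_injective
  rw [h1, Nat.card_Ico] at h2
  omega

lemma upset_mem {k : ℕ} (S : Finset (Fin k))
    (hS : ∀ a b : Fin k, a ≤ b → a ∈ S → b ∈ S) (j : Fin k) :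
    j ∈ S ↔ k - S.card ≤ j.val := by
  constructor
  · intro hj
    have hsub : Finset.univ.filter (fun x : Fin k => j.val ≤ x.val) ⊆ S := by
      intro x hx
      simp only [Finset.mem_filter, Finset.mem_univ, true_and] at hx
      exact hS j x hx hj
    have h1 := Finset.card_le_card hsub
    rw [card_filter_le_val] at h1
    have := j.isLt
    omega
  · intro hj
    by_contra hjS
    have hsub : S ⊆ Finset.univ.filter (fun x : Fin k => j.val + 1 ≤ x.val) := by
      intro x hx
      simp only [Finset.mem_filter, Finset.mem_univ, true_and]
      by_contra hle
      exact hjS (hS x j (by omega : x.val ≤ j.val) hx)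
    have h1 := Finset.card_le_card hsub
    rw [card_filter_le_val] at h1
    have := j.isLt
    omega

variable (m k : ℕ)

/-- The set of "block-end candidates ≥ i" for level `j`, given data `f`. -/
noncomputable def Efin (f : Fin m → Fin (k+1)) (j : Fin k) (i : Fin (m+1)) :
    Finset (Fin (m+1)) :=
  Finset.univ.filter
    (fun p => i ≤ p ∧ ∀ h : p.val < m, k ≤ j.val + (f ⟨p.val, h⟩).val)

lemma Efin_ne (f : Fin m → Fin (k+1)) (j : Fin k) (i : Fin (m+1)) :
    (Efin m k f j i).Nonempty := by
  refine ⟨Fin.last m, ?_⟩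
  simp only [Efin, Finset.mem_filter, Finset.mem_univ, true_and]
  refine ⟨Fin.le_last i, fun h => ?_⟩
  simp only [Fin.val_last] at h
  omega

noncomputable def Gfun (f : Fin m → Fin (k+1)) (j : Fin k) (i : Fin (m+1)) :
    Fin (m+1) :=
  (Efin m k f j i).min' (Efin_ne m k f j i)

lemma Gfun_mem (f : Fin m → Fin (k+1)) (j : Fin k) (i : Fin (m+1)) :
    Gfun m k f j i ∈ Efin m k f j i := Finset.min'_mem _ _

lemma Gfun_le (f : Fin m → Fin (k+1)) (j : Fin k) (i : Fin (m+1)) {p : Fin (m+1)}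
    (hp : p ∈ Efin m k f j i) : Gfun m k f j i ≤ p := Finset.min'_le _ _ hp

lemma le_Gfun (f : Fin m → Fin (k+1)) (j : Fin k) (i : Fin (m+1)) :
    i ≤ Gfun m k f j i := by
  have := Gfun_mem m k f j i
  simp only [Efin, Finset.mem_filter, Finset.mem_univ, true_and] at this
  exact this.1

lemma Gfun_end (f : Fin m → Fin (k+1)) (j : Fin k) (i : Fin (m+1)) :
    ∀ h : (Gfun m k f j i).val < m, k ≤ j.val + (f ⟨(Gfun m k f j i).val, h⟩).val := by
  have := Gfun_mem m k f j i
  simp only [Efin, Finset.mem_filter, Finset.mem_univ, true_and] at this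
  exact this.2

lemma Gfun_interval (f : Fin m → Fin (k+1)) (j : Fin k) (i p : Fin (m+1))
    (h1 : i ≤ p) (h2 : p ≤ Gfun m k f j i) : Gfun m k f j p = Gfun m k f j i := by
  apply le_antisymm
  · apply Gfun_le
    simp only [Efin, Finset.mem_filter, Finset.mem_univ, true_and]
    exact ⟨h2, Gfun_end m k f j i⟩
  · apply Gfun_le
    simp only [Efin, Finset.mem_filter, Finset.mem_univ, true_and]
    exact ⟨le_trans h1 (le_Gfun m k f j p), Gfun_end m k f j p⟩

lemma Gfun_anti (f : Fin m → Fin (k+1)) (j j' : Fin k) (hjj : j ≤ j') (i : Fin (m+1)) :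
    Gfun m k f j' i ≤ Gfun m k f j i := by
  apply Gfun_le
  have := Gfun_mem m k f j i
  simp only [Efin, Finset.mem_filter, Finset.mem_univ, true_and] at this ⊢
  refine ⟨this.1, fun h => ?_⟩
  have := this.2 h
  have : j.val ≤ j'.val := hjj
  omega

noncomputable def Ffun (t : Fin k → Fin (m+1) → Fin (m+1)) (i : Fin m) : Fin (k+1) :=
  ⟨(Finset.univ.filter (fun j : Fin k => t j i.castSucc = i.castSucc)).card, by
    have h := Finset.card_filter_le (Finset.univ : Finset (Fin k))
      (fun j : Fin k => t j i.castSucc = i.castSucc)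
    simp only [Finset.card_univ, Fintype.card_fin] at h
    omega⟩

lemma right_inv (f : Fin m → Fin (k+1)) : Ffun m k (Gfun m k f) = f := by
  funext i
  have key : ∀ j : Fin k, Gfun m k f j i.castSucc = i.castSucc ↔
      k ≤ j.val + (f i).val := by
    intro j
    constructor
    · intro h
      have h2 := Gfun_end m k f j i.castSucc
      rw [h] at h2
      have hlt : (i.castSucc : Fin (m+1)).val < m := by
        simp only [Fin.coe_castSucc]; exact i.isLt
      have := h2 hlt
      have he : (⟨(i.castSucc : Fin (m+1)).val, hlt⟩ : Fin m) = i := by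
        apply Fin.ext; simp
      rwa [he] at this
    · intro h
      apply le_antisymm
      · apply Gfun_le
        simp only [Efin, Finset.mem_filter, Finset.mem_univ, true_and]
        refine ⟨le_refl _, fun hlt => ?_⟩
        have he : (⟨(i.castSucc : Fin (m+1)).val, hlt⟩ : Fin m) = i := by
          apply Fin.ext; simp
        rwa [he]
      · exact le_Gfun m k f j i.castSucc
  apply Fin.ext
  show (Finset.univ.filter (fun j : Fin k =>
      Gfun m k f j i.castSucc = i.castSucc)).card = (f i).val
  have hfi : (f i).val ≤ k := by have := (f i).isLt; omega
  rw [Finset.filter_congr (fun j _ => by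
    rw [key j]
    exact ⟨fun h => by omega, fun h => by omega⟩ :
      ∀ j ∈ Finset.univ, (Gfun m k f j i.castSucc = i.castSucc) ↔
        (k - (f i).val ≤ j.val))]
  rw [card_filter_le_val]
  omega

lemma left_inv (t : Fin k → Fin (m+1) → Fin (m+1))
    (h1 : ∀ j, (∀ i, i ≤ t j i) ∧
      ∀ i p : Fin (m+1), i ≤ p → p ≤ t j i → t j p = t j i)
    (h2 : ∀ j j' : Fin k, j ≤ j' → ∀ i, t j' i ≤ t j i) :
    Gfun m k (Ffun m k t) = t := by
  -- subclaim
  have upS : ∀ p : Fin (m+1), ∀ a b : Fin k, a ≤ b → t a p = p → t b p = p := by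
    intro p a b hab ha
    apply le_antisymm
    · calc t b p ≤ t a p := h2 a b hab p
        _ = p := ha
    · exact (h1 b).1 p
  have cardS : ∀ (p : Fin (m+1)) (h : p.val < m),
      ((Ffun m k t ⟨p.val, h⟩) : ℕ) =
        (Finset.univ.filter (fun j' : Fin k => t j' p = p)).card := by
    intro p h
    have he : (⟨p.val, h⟩ : Fin m).castSucc = p := by apply Fin.ext; simp
    simp only [Ffun, he]
  have subclaim : ∀ (j : Fin k) (p : Fin (m+1)),
      t j p = p ↔ ∀ h : p.val < m, k ≤ j.val + ((Ffun m k t ⟨p.val, h⟩) : ℕ) := by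
    intro j p
    constructor
    · intro hjp h
      rw [cardS p h]
      have hmem := (upset_mem (Finset.univ.filter (fun j' : Fin k => t j' p = p))
        (fun a b hab ha => by
          simp only [Finset.mem_filter, Finset.mem_univ, true_and] at ha ⊢
          exact upS p a b hab ha) j).mp
        (by simp only [Finset.mem_filter, Finset.mem_univ, true_and]; exact hjp)
      omega
    · intro hall
      by_cases h : p.val < m
      · have := hall h
        rw [cardS p h] at this
        have hmem := (upset_mem (Finset.univ.filter (fun j' : Fin k => t j' p = p))
          (fun a b hab ha => by
            simp only [Finset.mem_filter, Finset.mem_univ, true_and] at ha ⊢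
            exact upS p a b hab ha) j).mpr (by omega)
        simp only [Finset.mem_filter, Finset.mem_univ, true_and] at hmem
        exact hmem
      · -- p.val = m, so p is the last element
        have hp : p.val = m := by have := p.isLt; omega
        apply le_antisymm
        · rw [Fin.le_def, hp]
          have := (t j p).isLt; omega
        · exact (h1 j).1 p
  funext j i
  apply le_antisymm
  · apply Gfun_le
    simp only [Efin, Finset.mem_filter, Finset.mem_univ, true_and]
    refine ⟨(h1 j).1 i, ?_⟩
    have htt : t j (t j i) = t j i := (h1 j).2 i (t j i) ((h1 j).1 i) (le_refl _)
    exact (subclaim j (t j i)).mp htt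
  · set q := Gfun m k (Ffun m k t) j i with hq
    have hmem := Gfun_mem m k (Ffun m k t) j i
    simp only [Efin, Finset.mem_filter, Finset.mem_univ, true_and, ← hq] at hmem
    have htq : t j q = q := (subclaim j q).mpr hmem.2
    by_contra hlt
    push_neg at hlt
    have := (h1 j).2 i q hmem.1 (le_of_lt hlt)
    rw [htq] at this
    rw [this] at hlt
    exact lt_irrefl _ hlt

lemma main (m k : ℕ) :
    Fintype.card {t : Fin k → (Fin (m+1) → Fin (m+1)) //
      (∀ j, (∀ i, i ≤ t j i) ∧
        ∀ i p : Fin (m+1), i ≤ p → p ≤ t j i → t j p = t j i) ∧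
      (∀ j j' : Fin k, j ≤ j' → ∀ i, t j' i ≤ t j i)} = (k + 1) ^ m := by
  have hcard : Fintype.card (Fin m → Fin (k+1)) = (k + 1) ^ m := by
    simp
  rw [← hcard]
  apply Fintype.card_congr
  exact {
    toFun := fun t => Ffun m k t.1
    invFun := fun f => ⟨Gfun m k f, ⟨fun j => ⟨le_Gfun m k f j,
      fun i p hip hpt => Gfun_interval m k f j i p hip hpt⟩,
      fun j j' hjj i => Gfun_anti m k f j j' hjj i⟩⟩
    left_inv := fun t => Subtype.ext (left_inv m k t.1 t.2.1 t.2.2)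
    right_inv := fun f => right_inv m k f }

end Stmt2Aux

/-- For `n, k ≥ 1`, the number of `k`-tuples `(a^(1), …, a^(k))` of elements of
`A(n)` that decrease componentwise (`a^(k) ≤ ⋯ ≤ a^(1)`) equals `(k+1)^(n-1)`. -/
theorem stmt2 (n k : ℕ) (hn : 1 ≤ n) (hk : 1 ≤ k) :
    Fintype.card {t : Fin k → (Fin n → Fin n) //
      (∀ j, (∀ i, i ≤ t j i) ∧
        ∀ i m : Fin n, i ≤ m → m ≤ t j i → t j m = t j i) ∧
      (∀ j j' : Fin k, j ≤ j' → ∀ i, t j' i ≤ t j i)} = (k + 1) ^ (n - 1) := by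
  obtain ⟨m, rfl⟩ : ∃ m, n = m + 1 := ⟨n - 1, by omega⟩
  simpa using Stmt2Aux.main m k
end

section
/- For all n ≥ 2, the double sum ∑_{k=1}^{n-1} ∑_{n_1+⋯+n_k = n, n_i ≥ 1} ∏_{j=1}^k j^(n_j - 1) equals B_n - 1, where B_n is the n-th Bell number. -/
/-!
Both sides are counted by Stirling numbers of the second kind `S(n, k)`. The weighted sum over
compositions of `n` into `k` parts satisfies `S(n+1, k+1) = S(n, k) + (k+1) S(n, k+1)`, by
splitting on whether the last part is `1` (drop it) or larger (decrease it, paying a factor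
`k+1`). On the other side, a partition of `Fin n` is encoded by the map sending each element to
the least element of its block; the blocks are the fixed points, and removing the last element
gives the same recursion for the number of such maps with `k` fixed points. Hence
`B_n = ∑ₖ S(n, k)`, and the terms `k = 0` and `k = n` contribute `S(n, 0) + S(n, n) = 1` when
`n ≥ 1`.
-/

open Finset

/-- The `n`-th Bell number: the number of partitions of an `n`-element set. -/
def bellNumber (n : ℕ) : ℕ :=
  Fintype.card (Finpartition (Finset.univ : Finset (Fin n)))

def posCompositions (k n : ℕ) : Finset (Fin k → ℕ) :=
  {c ∈ Finset.Nat.antidiagonalTuple k n | ∀ j, 0 < c j}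

def compositionWeight {k : ℕ} (c : Fin k → ℕ) : ℕ :=
  ∏ j : Fin k, ((j : ℕ) + 1) ^ (c j - 1)

lemma mem_posCompositions {k n : ℕ} {c : Fin k → ℕ} :
    c ∈ posCompositions k n ↔ ∑ j, c j = n ∧ ∀ j, 0 < c j := by
  simp [posCompositions, Finset.Nat.mem_antidiagonalTuple]

lemma snoc_mem_posCompositions {k n m : ℕ} {d : Fin k → ℕ} :
    (Fin.snoc d m : Fin (k + 1) → ℕ) ∈ posCompositions (k + 1) n ↔
      d ∈ posCompositions k (n - m) ∧ 0 < m ∧ m ≤ n := by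
  simp only [mem_posCompositions, Fin.sum_univ_castSucc, Fin.forall_fin_succ', Fin.snoc_castSucc,
    Fin.snoc_last]
  constructor
  · rintro ⟨hsum, hpos, hm⟩
    exact ⟨⟨by omega, hpos⟩, hm, by omega⟩
  · rintro ⟨⟨hsum, hpos⟩, hm, hmn⟩
    exact ⟨by omega, hpos, hm⟩

lemma compositionWeight_snoc {k : ℕ} (d : Fin k → ℕ) (m : ℕ) :
    compositionWeight (Fin.snoc d m : Fin (k + 1) → ℕ) =
      compositionWeight d * (k + 1) ^ (m - 1) := by
  simp [compositionWeight, Fin.prod_univ_castSucc]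

lemma sum_posCompositions_last_eq_one (k n : ℕ) :
    ∑ c ∈ posCompositions (k + 1) (n + 1) with c (Fin.last k) = 1, compositionWeight c =
      ∑ d ∈ posCompositions k n, compositionWeight d := by
  refine sum_nbij' Fin.init (Fin.snoc · 1) ?_ (by simp [snoc_mem_posCompositions]) ?_
    (by simp) ?_
  all_goals
    intro c hc
    obtain ⟨d, m, rfl⟩ : ∃ d m, c = Fin.snoc d m := ⟨_, _, (Fin.snoc_init_self c).symm⟩
    simp only [mem_filter, snoc_mem_posCompositions, Fin.snoc_last] at hc
  · simpa [hc.2] using hc.1.1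
  · simp [hc.2]
  · simp [compositionWeight_snoc, hc.2]

lemma sum_posCompositions_last_ne_one (k n : ℕ) :
    ∑ c ∈ posCompositions (k + 1) (n + 1) with c (Fin.last k) ≠ 1, compositionWeight c =
      (k + 1) * ∑ d ∈ posCompositions (k + 1) n, compositionWeight d := by
  rw [mul_sum]
  refine sum_nbij' (fun c => Fin.snoc (Fin.init c) (c (Fin.last k) - 1))
    (fun c => Fin.snoc (Fin.init c) (c (Fin.last k) + 1)) ?_ ?_ ?_ ?_ ?_
  all_goals
    intro c hc
    obtain ⟨d, m, rfl⟩ : ∃ d m, c = Fin.snoc d m := ⟨_, _, (Fin.snoc_init_self c).symm⟩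
    simp only [mem_filter, snoc_mem_posCompositions,
      Fin.snoc_last, Fin.init_snoc] at hc ⊢
  · obtain ⟨⟨hd, hm, hmn⟩, hm1⟩ := hc
    refine ⟨?_, by omega, by omega⟩
    rwa [show n - (m - 1) = n + 1 - m by omega]
  · obtain ⟨hd, hm, hmn⟩ := hc
    refine ⟨⟨?_, by omega, by omega⟩, by omega⟩
    rwa [show n + 1 - (m + 1) = n - m by omega]
  · congr; omega
  · rfl
  · obtain ⟨j, rfl⟩ : ∃ j, m = j + 2 := ⟨m - 2, by omega⟩
    simp [compositionWeight_snoc, pow_succ]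
    ring

lemma sum_compositionWeight_succ_succ (k n : ℕ) :
    ∑ c ∈ posCompositions (k + 1) (n + 1), compositionWeight c =
      ∑ c ∈ posCompositions k n, compositionWeight c +
        (k + 1) * ∑ c ∈ posCompositions (k + 1) n, compositionWeight c := by
  rw [← sum_filter_add_sum_filter_not _ (fun c => c (Fin.last k) = 1),
    sum_posCompositions_last_eq_one, sum_posCompositions_last_ne_one]

theorem sum_compositionWeight_eq_stirlingSecond :
    ∀ n k, ∑ c ∈ posCompositions k n, compositionWeight c = Nat.stirlingSecond n k
  | 0, 0 => by simp [posCompositions, compositionWeight]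
  | 0, k + 1 => by
    rw [Nat.stirlingSecond_zero_succ, sum_eq_zero]
    intro c hc
    obtain ⟨hsum, hpos⟩ := mem_posCompositions.1 hc
    exact absurd (sum_eq_zero_iff.1 hsum 0 (mem_univ _)) (hpos 0).ne'
  | n + 1, 0 => by simp [posCompositions]
  | n + 1, k + 1 => by
    rw [sum_compositionWeight_succ_succ, sum_compositionWeight_eq_stirlingSecond n k,
      sum_compositionWeight_eq_stirlingSecond n (k + 1), Nat.stirlingSecond_succ_succ, add_comm]

def IsLeastRep {α : Type*} [LinearOrder α] (f : α → α) : Prop :=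
  ∀ i, f (f i) = f i ∧ f i ≤ i

instance {α : Type*} [LinearOrder α] [Fintype α] : DecidablePred (IsLeastRep (α := α)) :=
  fun f => inferInstanceAs (Decidable (∀ i, f (f i) = f i ∧ f i ≤ i))

namespace Finpartition

lemma parts_eq_image_part {α : Type*} [DecidableEq α] {s : Finset α} (P : Finpartition s) :
    P.parts = s.image P.part := by
  ext t
  simp only [mem_image]
  constructor
  · intro ht
    obtain ⟨a, ha⟩ := P.nonempty_of_mem_parts ht
    exact ⟨a, P.le ht ha, P.part_eq_of_mem ht ha⟩
  · rintro ⟨a, ha, rfl⟩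
    exact P.part_mem.2 ha

variable {α : Type*} [LinearOrder α] [Fintype α]

def leastRep (P : Finpartition (univ : Finset α)) (i : α) : α :=
  (P.part i).min' (P.part_nonempty.2 (mem_univ i))

variable (P : Finpartition (univ : Finset α))

lemma part_leastRep (i : α) : P.part (P.leastRep i) = P.part i :=
  P.part_eq_of_mem (P.part_mem.2 (mem_univ i)) (min'_mem _ _)

lemma leastRep_eq_leastRep_iff {a b : α} : P.leastRep a = P.leastRep b ↔ P.part a = P.part b :=
  ⟨fun h => by rw [← P.part_leastRep a, h, part_leastRep],
    fun h => by simp only [leastRep, h]⟩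

lemma isLeastRep_leastRep : IsLeastRep P.leastRep := fun i =>
  ⟨P.leastRep_eq_leastRep_iff.2 (P.part_leastRep i), min'_le _ _ (P.mem_part (mem_univ i))⟩

end Finpartition

section

variable {α : Type*} [LinearOrder α] [Fintype α]

instance (f : α → α) : DecidableRel (Setoid.ker f) := fun a b =>
  inferInstanceAs (Decidable (f a = f b))

def finpartitionEquivLeastRep :
    Finpartition (univ : Finset α) ≃ {f : α → α // IsLeastRep f} where
  toFun P := ⟨P.leastRep, P.isLeastRep_leastRep⟩
  invFun f := Finpartition.ofSetoid (Setoid.ker f.1)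
  left_inv P := by
    ext1
    rw [Finpartition.parts_eq_image_part, Finpartition.parts_eq_image_part]
    refine image_congr fun a _ => ?_
    ext b
    rw [Finpartition.mem_part_ofSetoid_iff_rel,
      P.mem_part_iff_part_eq_part (mem_univ b) (mem_univ a)]
    exact (P.leastRep_eq_leastRep_iff).trans eq_comm
  right_inv := by
    rintro ⟨f, hf⟩
    ext i
    have hmem (b : α) : b ∈ (Finpartition.ofSetoid (Setoid.ker f)).part i ↔ f i = f b :=
      Finpartition.mem_part_ofSetoid_iff_rel
    show Finpartition.leastRep _ i = f i
    exact le_antisymm (min'_le _ _ ((hmem _).2 (hf i).1.symm))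
      (le_min' _ _ _ fun b hb => (hmem b).1 hb ▸ (hf b).2)

lemma card_finpartition_eq_card_isLeastRep :
    Fintype.card (Finpartition (univ : Finset α)) = #{f : α → α | IsLeastRep f} := by
  rw [Fintype.card_congr finpartitionEquivLeastRep, Fintype.card_subtype]

end

namespace Fin

variable {n : ℕ}

def restrictLast (f : Fin (n + 1) → Fin (n + 1)) (i : Fin n) : Fin n :=
  if h : f i.castSucc = last n then i else (f i.castSucc).castPred h

def extendLast (g : Fin n → Fin n) (p : Fin (n + 1)) : Fin (n + 1) → Fin (n + 1) :=
  snoc (fun i => (g i).castSucc) p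

@[simp]
lemma extendLast_castSucc (g : Fin n → Fin n) (p : Fin (n + 1)) (i : Fin n) :
    extendLast g p i.castSucc = (g i).castSucc := by
  simp [extendLast]

@[simp]
lemma extendLast_last (g : Fin n → Fin n) (p : Fin (n + 1)) : extendLast g p (last n) = p := by
  simp [extendLast]

@[simp]
lemma restrictLast_extendLast (g : Fin n → Fin n) (p : Fin (n + 1)) :
    restrictLast (extendLast g p) = g := by
  funext i
  simp [restrictLast, castSucc_ne_last]

lemma castSucc_restrictLast {f : Fin (n + 1) → Fin (n + 1)} (hf : IsLeastRep f) (i : Fin n) :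
    (restrictLast f i).castSucc = f i.castSucc := by
  have h : f i.castSucc ≠ last n := ((hf _).2.trans_lt (castSucc_lt_last i)).ne
  simp [restrictLast, h]

lemma extendLast_restrictLast {f : Fin (n + 1) → Fin (n + 1)} (hf : IsLeastRep f) :
    extendLast (restrictLast f) (f (last n)) = f := by
  funext i
  induction i using lastCases with
  | last => simp
  | cast i => simp [castSucc_restrictLast hf]

lemma isLeastRep_restrictLast {f : Fin (n + 1) → Fin (n + 1)} (hf : IsLeastRep f) :
    IsLeastRep (restrictLast f) := by
  intro i
  rw [← castSucc_inj, ← castSucc_le_castSucc_iff]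
  simpa only [castSucc_restrictLast hf] using hf i.castSucc

lemma isLeastRep_extendLast {g : Fin n → Fin n} (hg : IsLeastRep g) {p : Fin (n + 1)}
    (hp : extendLast g p p = p) : IsLeastRep (extendLast g p) := by
  intro i
  induction i using lastCases with
  | last => simpa [le_last] using hp
  | cast i => simpa using hg i

lemma card_fixedPoints_extendLast (g : Fin n → Fin n) (p : Fin (n + 1)) :
    #{i | extendLast g p i = i} = #{i | g i = i} + if p = last n then 1 else 0 := by
  simp only [card_filter, sum_univ_castSucc, extendLast_castSucc, castSucc_inj, extendLast_last]

lemma card_fixedPoints_of_isLeastRep {f : Fin (n + 1) → Fin (n + 1)} (hf : IsLeastRep f) :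
    #{i | f i = i} = #{i | restrictLast f i = i} + if f (last n) = last n then 1 else 0 := by
  conv_lhs => rw [← extendLast_restrictLast hf]
  exact card_fixedPoints_extendLast _ _

end Fin

open Fin

def leastRepCount (n k : ℕ) : ℕ := #{f : Fin n → Fin n | IsLeastRep f ∧ #{i | f i = i} = k}

lemma card_isLeastRep_last_eq_last (n k : ℕ) :
    #{f : Fin (n + 1) → Fin (n + 1) |
      (IsLeastRep f ∧ #{i | f i = i} = k + 1) ∧ f (last n) = last n} = leastRepCount n k := by
  refine card_nbij' restrictLast (extendLast · (last n)) ?_ ?_ ?_ ?_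
  · intro f hf
    simp only [coe_filter, Set.mem_ofPred_eq, mem_univ, true_and] at hf ⊢
    obtain ⟨⟨hf, hfix⟩, hlast⟩ := hf
    rw [card_fixedPoints_of_isLeastRep hf, if_pos hlast] at hfix
    exact ⟨isLeastRep_restrictLast hf, by omega⟩
  · intro g hg
    simp only [coe_filter, Set.mem_ofPred_eq, mem_univ, true_and] at hg ⊢
    refine ⟨⟨isLeastRep_extendLast hg.1 (by simp), ?_⟩, by simp⟩
    rw [card_fixedPoints_extendLast, if_pos rfl, hg.2]
  · intro f hf
    simp only [coe_filter, Set.mem_ofPred_eq, mem_univ, true_and] at hf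
    rw [← hf.2]
    exact extendLast_restrictLast hf.1.1
  · intro g _
    exact restrictLast_extendLast g _

lemma card_isLeastRep_last_ne_last (n k : ℕ) :
    #{f : Fin (n + 1) → Fin (n + 1) |
      (IsLeastRep f ∧ #{i | f i = i} = k + 1) ∧ ¬f (last n) = last n} =
      (k + 1) * leastRepCount n (k + 1) := by
  have hsigma : #(({g : Fin n → Fin n | IsLeastRep g ∧ #{i | g i = i} = k + 1} : Finset _).sigma
      fun g => ({q | g q = q} : Finset _)) = (k + 1) * leastRepCount n (k + 1) := by
    rw [card_sigma, sum_const_nat fun g hg => (mem_filter.1 hg).2.2, mul_comm, leastRepCount]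
  rw [← hsigma]
  symm
  refine card_bij (fun x _ => extendLast x.1 x.2.castSucc) ?_ ?_ ?_
  · rintro ⟨g, q⟩ hx
    simp only [mem_sigma, mem_filter, mem_univ, true_and] at hx ⊢
    obtain ⟨⟨hg, hfix⟩, hq⟩ := hx
    refine ⟨⟨isLeastRep_extendLast hg (by simp [hq]), ?_⟩, by simp [castSucc_ne_last]⟩
    rw [card_fixedPoints_extendLast, if_neg (castSucc_ne_last q), hfix, add_zero]
  · rintro ⟨g, q⟩ - ⟨g', q'⟩ - h
    have hg : g = g' := by simpa using congrArg restrictLast h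
    have hq : q = q' := by simpa using congrFun h (last n)
    rw [hg, hq]
  · intro f hf
    simp only [mem_filter, mem_univ, true_and] at hf
    obtain ⟨⟨hf, hfix⟩, hlast⟩ := hf
    refine ⟨⟨restrictLast f, (f (last n)).castPred hlast⟩, ?_, ?_⟩
    · simp only [mem_sigma, mem_filter, mem_univ, true_and]
      refine ⟨⟨isLeastRep_restrictLast hf, ?_⟩, ?_⟩
      · rwa [card_fixedPoints_of_isLeastRep hf, if_neg hlast, add_zero] at hfix
      · rw [← castSucc_inj, castSucc_restrictLast hf, castSucc_castPred]
        exact (hf _).1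
    · simp only [castSucc_castPred]
      exact extendLast_restrictLast hf

lemma leastRepCount_succ_succ (n k : ℕ) :
    leastRepCount (n + 1) (k + 1) = leastRepCount n k + (k + 1) * leastRepCount n (k + 1) := by
  rw [leastRepCount, ← card_filter_add_card_filter_not (p := fun f => f (last n) = last n),
    filter_filter, filter_filter, card_isLeastRep_last_eq_last, card_isLeastRep_last_ne_last]

lemma leastRepCount_zero_zero : leastRepCount 0 0 = 1 := by decide

lemma leastRepCount_zero_succ (k : ℕ) : leastRepCount 0 (k + 1) = 0 := by
  simp [leastRepCount]

lemma leastRepCount_succ_zero (n : ℕ) : leastRepCount (n + 1) 0 = 0 := by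
  rw [leastRepCount, card_eq_zero, filter_eq_empty_iff]
  rintro f - ⟨hf, hfix⟩
  have h0 : f 0 = 0 := le_antisymm (hf 0).2 (Fin.zero_le _)
  have h0_mem : 0 ∈ ({i | f i = i} : Finset (Fin (n + 1))) := by simp [h0]
  exact (card_pos.2 ⟨0, h0_mem⟩).ne' hfix

theorem leastRepCount_eq_stirlingSecond : ∀ n k, leastRepCount n k = Nat.stirlingSecond n k
  | 0, 0 => leastRepCount_zero_zero
  | 0, k + 1 => leastRepCount_zero_succ k
  | n + 1, 0 => leastRepCount_succ_zero n
  | n + 1, k + 1 => by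
    rw [leastRepCount_succ_succ, leastRepCount_eq_stirlingSecond n k,
      leastRepCount_eq_stirlingSecond n (k + 1), Nat.stirlingSecond_succ_succ, add_comm]

theorem bellNumber_eq_sum_stirlingSecond (n : ℕ) :
    bellNumber n = ∑ k ∈ range (n + 1), Nat.stirlingSecond n k := by
  rw [bellNumber, card_finpartition_eq_card_isLeastRep,
    card_eq_sum_card_fiberwise (f := fun f => #{i | f i = i}) (t := range (n + 1))]
  · refine sum_congr rfl fun k _ => ?_
    rw [filter_filter, ← leastRepCount_eq_stirlingSecond, leastRepCount]
  · intro f _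
    simpa [Nat.lt_succ_iff] using card_filter_le univ fun i => f i = i

theorem sum_Icc_stirlingSecond_add_one (n : ℕ) :
    ∑ k ∈ Icc 1 (n - 1), Nat.stirlingSecond n k + 1 =
      ∑ k ∈ range (n + 1), Nat.stirlingSecond n k := by
  rcases n with _ | m
  · simp
  · rw [range_eq_Ico, sum_eq_sum_Ico_succ_bot (by omega), sum_Ico_succ_top (by omega),
      Nat.stirlingSecond_succ_zero, Nat.stirlingSecond_self, zero_add]
    rfl

theorem stmt5_general (n : ℕ) :
    ∑ k ∈ Finset.Icc 1 (n - 1),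
      ∑ c ∈ (Finset.Nat.antidiagonalTuple k n).filter (fun c => ∀ j, 0 < c j),
        ∏ j : Fin k, ((j : ℕ) + 1) ^ (c j - 1) = bellNumber n - 1 := by
  rw [bellNumber_eq_sum_stirlingSecond, ← sum_Icc_stirlingSecond_add_one, Nat.add_sub_cancel]
  exact sum_congr rfl fun k _ => sum_compositionWeight_eq_stirlingSecond n k

/-- For all `n ≥ 2`,
`∑_{k=1}^{n-1} ∑_{n_1+⋯+n_k=n, n_i ≥ 1} ∏_{j=1}^k j^(n_j - 1) = B_n - 1`. -/
theorem stmt5 (n : ℕ) (hn : 2 ≤ n) :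
    ∑ k ∈ Finset.Icc 1 (n - 1),
      ∑ c ∈ (Finset.Nat.antidiagonalTuple k n).filter (fun c => ∀ j, 0 < c j),
        ∏ j : Fin k, ((j : ℕ) + 1) ^ (c j - 1) = bellNumber n - 1 :=
  stmt5_general n
end

section
/- For every k ≥ 1 and n ≥ k, the Stirling number of the second kind S(n,k) equals the sum over all compositions n_1 + ⋯ + n_k = n into k positive parts of ∏_{j=1}^k j^(n_j - 1). -/
/-!
Both sides satisfy `S(n+1, k+1) = S(n, k) + (k+1) S(n, k+1)` with the same boundary values.
For partitions, delete a new element `a`: either `{a}` was a block, and we get a partition with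
one block fewer, or `a` sat in one of the `k+1` blocks of the remaining partition. For
compositions, look at the last part: if it is `1`, drop it; otherwise decrease it by one, which
divides the weight by `k+1`.
-/

/-- The Stirling number of the second kind `S(n,k)`: the number of partitions
of an `n`-element set into exactly `k` nonempty blocks. -/
def stirlingSecond (n k : ℕ) : ℕ :=
  Fintype.card {P : Finpartition (Finset.univ : Finset (Fin n)) // P.parts.card = k}

open Finset

namespace Finpartition

variable {α : Type*} [DecidableEq α]

theorem avoid_parts_of_mem {s t : Finset α} (P : Finpartition s) (ht : t ∈ P.parts) :
    (P.avoid t).parts = P.parts.erase t := by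
  ext u
  simp only [mem_avoid, mem_erase]
  constructor
  · rintro ⟨d, hd, hdt, rfl⟩
    have hne : d ≠ t := by rintro rfl; exact hdt le_rfl
    have hdisj : Disjoint d t := P.disjoint hd ht hne
    rw [sdiff_eq_self_of_disjoint hdisj]
    exact ⟨hne, hd⟩
  · rintro ⟨hne, hu⟩
    have hdisj : Disjoint u t := P.disjoint hu ht hne
    exact ⟨u, hu, fun h => P.ne_bot hu (hdisj.eq_bot_of_le h), sdiff_eq_self_of_disjoint hdisj⟩

theorem notMem_parts_of_mem {s u : Finset α} {a : α} (ha : a ∉ s) (P : Finpartition s)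
    (hu : a ∈ u) : u ∉ P.parts :=
  fun h => ha (P.subset h hu)

variable {s : Finset α} {a : α} (ha : a ∉ s)

def addSingleton (P : Finpartition s) : Finpartition (s.cons a ha) :=
  P.extend (b := {a}) (singleton_ne_empty a) (disjoint_singleton_right.2 ha) (by ext; simp)

def addToPart (P : Finpartition s) {t : Finset α} (ht : t ∈ P.parts) :
    Finpartition (s.cons a ha) :=
  (P.avoid t).extend (b := insert a t) (insert_ne_empty a t)
    (disjoint_insert_right.2 ⟨fun h => ha (mem_sdiff.1 h).1, sdiff_disjoint⟩) (by
      ext x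
      have hxt : x ∈ t → x ∈ s := fun h => P.subset ht h
      simp only [sup_eq_union, mem_union, mem_sdiff, mem_insert, mem_cons]
      tauto)

@[simp]
theorem addSingleton_parts (P : Finpartition s) :
    (P.addSingleton ha).parts = insert {a} P.parts := rfl

@[simp]
theorem addToPart_parts (P : Finpartition s) {t : Finset α} (ht : t ∈ P.parts) :
    (P.addToPart ha ht).parts = insert (insert a t) (P.parts.erase t) := by
  simp [addToPart, avoid_parts_of_mem P ht]

theorem part_addSingleton (P : Finpartition s) : (P.addSingleton ha).part a = {a} :=
  part_eq_of_mem _ (by simp) (mem_singleton_self a)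

theorem part_addToPart (P : Finpartition s) {t : Finset α} (ht : t ∈ P.parts) :
    (P.addToPart ha ht).part a = insert a t :=
  part_eq_of_mem _ (by simp) (mem_insert_self a t)

theorem part_addToPart_ne_singleton (P : Finpartition s) {t : Finset α} (ht : t ∈ P.parts) :
    (P.addToPart ha ht).part a ≠ {a} := by
  obtain ⟨x, hx⟩ := P.nonempty_of_mem_parts ht
  rw [part_addToPart]
  intro h
  have hxa : x = a := mem_singleton.1 (h ▸ mem_insert_of_mem hx)
  exact notMem_parts_of_mem ha P (hxa ▸ hx) ht

theorem restrict_cons_parts (P : Finpartition (s.cons a ha)) :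
    (P.restrict (subset_cons ha)).parts =
      (insert ((P.part a).erase a) (P.parts.erase (P.part a))).erase ∅ := by
  have hpart : P.part a ∈ P.parts := P.part_mem.2 (mem_cons_self a s)
  have hinter : ∀ d ∈ P.parts, d ⊓ s = d.erase a := fun d hd => by
    ext x
    have hx : x ∈ d → x = a ∨ x ∈ s := fun h => mem_cons.1 (P.subset hd h)
    simp only [inf_eq_inter, mem_inter, mem_erase]
    exact ⟨fun ⟨hxd, hxs⟩ => ⟨ne_of_mem_of_not_mem hxs ha, hxd⟩,
      fun ⟨hxa, hxd⟩ => ⟨hxd, (hx hxd).resolve_left hxa⟩⟩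
  have hother : ∀ d ∈ P.parts.erase (P.part a), d.erase a = d := fun d hd => by
    obtain ⟨hne, hd⟩ := mem_erase.1 hd
    exact erase_eq_of_notMem fun h => hne (P.part_eq_of_mem hd h).symm
  change (P.parts.image (· ⊓ s)).erase ∅ = _
  rw [image_congr hinter]
  conv_lhs => rw [← insert_erase hpart, image_insert, image_congr hother, image_id']

theorem restrict_cons_parts_of_part_eq (P : Finpartition (s.cons a ha)) (h : P.part a = {a}) :
    (P.restrict (subset_cons ha)).parts = P.parts.erase {a} := by
  rw [restrict_cons_parts, h, erase_singleton, erase_insert_eq_erase,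
    erase_eq_of_notMem fun h' => P.empty_notMem_parts (mem_of_mem_erase h')]

theorem nonempty_erase_part (P : Finpartition (s.cons a ha)) (h : P.part a ≠ {a}) :
    ((P.part a).erase a).Nonempty := by
  rw [nonempty_iff_ne_empty, Ne, erase_eq_empty_iff, part_eq_empty]
  exact not_or.2 ⟨not_not.2 (mem_cons_self a s), h⟩

theorem restrict_cons_parts_of_part_ne (P : Finpartition (s.cons a ha)) (h : P.part a ≠ {a}) :
    (P.restrict (subset_cons ha)).parts =
      insert ((P.part a).erase a) (P.parts.erase (P.part a)) := by
  rw [restrict_cons_parts, erase_insert_of_ne (P.nonempty_erase_part ha h).ne_empty,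
    erase_eq_of_notMem fun h' => P.empty_notMem_parts (mem_of_mem_erase h')]

def equivOfPartEqSingleton :
    {P : Finpartition (s.cons a ha) // P.part a = {a}} ≃ Finpartition s where
  toFun P := P.1.restrict (subset_cons ha)
  invFun Q := ⟨Q.addSingleton ha, Q.part_addSingleton ha⟩
  left_inv := fun ⟨P, hP⟩ => by
    have hmem : {a} ∈ P.parts := hP ▸ P.part_mem.2 (mem_cons_self a s)
    ext1; ext1
    rw [addSingleton_parts, restrict_cons_parts_of_part_eq ha _ hP, insert_erase hmem]
  right_inv Q := by
    ext1
    rw [restrict_cons_parts_of_part_eq ha _ (Q.part_addSingleton ha), addSingleton_parts,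
      erase_insert (notMem_parts_of_mem ha Q (mem_singleton_self a))]

def equivOfPartNeSingleton :
    {P : Finpartition (s.cons a ha) // P.part a ≠ {a}} ≃
      Σ Q : Finpartition s, {t // t ∈ Q.parts} where
  toFun := fun ⟨P, hP⟩ => ⟨P.restrict (subset_cons ha), (P.part a).erase a, by
    rw [restrict_cons_parts_of_part_ne ha P hP]
    exact mem_insert_self _ _⟩
  invFun := fun ⟨Q, _, ht⟩ => ⟨Q.addToPart ha ht, Q.part_addToPart_ne_singleton ha ht⟩
  left_inv := fun ⟨P, hP⟩ => by
    have hmem : P.part a ∈ P.parts := P.part_mem.2 (mem_cons_self a s)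
    have hnotMem : (P.part a).erase a ∉ P.parts.erase (P.part a) := fun h => by
      obtain ⟨hne, hd⟩ := mem_erase.1 h
      obtain ⟨x, hx⟩ := P.nonempty_erase_part ha hP
      exact hne (P.eq_of_mem_parts hd hmem hx (mem_of_mem_erase hx))
    ext1; ext1
    dsimp only
    rw [addToPart_parts, insert_erase (P.mem_part (mem_cons_self a s)),
      restrict_cons_parts_of_part_ne ha P hP, erase_insert hnotMem, insert_erase hmem]
  right_inv := fun ⟨Q, t, ht⟩ => by
    have hat : a ∉ t := fun h => notMem_parts_of_mem ha Q h ht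
    have hparts : ((Q.addToPart ha ht).restrict (subset_cons ha)).parts = Q.parts := by
      rw [restrict_cons_parts_of_part_ne ha _ (Q.part_addToPart_ne_singleton ha ht),
        part_addToPart, erase_insert hat, addToPart_parts,
        erase_insert fun h => notMem_parts_of_mem ha Q (mem_insert_self a t) (mem_of_mem_erase h),
        insert_erase ht]
    refine Sigma.subtype_ext (Finpartition.ext hparts) ?_
    simp [part_addToPart, erase_insert hat]

def consEquiv :
    Finpartition (s.cons a ha) ≃ Finpartition s ⊕ Σ Q : Finpartition s, {t // t ∈ Q.parts} :=
  (Equiv.sumCompl fun P => P.part a = {a}).symm.trans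
    ((equivOfPartEqSingleton ha).sumCongr (equivOfPartNeSingleton ha))

theorem card_parts_consEquiv_symm_inl (Q : Finpartition s) :
    #((consEquiv ha).symm (.inl Q)).parts = #Q.parts + 1 :=
  card_insert_of_notMem (notMem_parts_of_mem ha Q (mem_singleton_self a))

theorem card_parts_consEquiv_symm_inr (x : Σ Q : Finpartition s, {t // t ∈ Q.parts}) :
    #((consEquiv ha).symm (.inr x)).parts = #x.1.parts := by
  obtain ⟨Q, t, ht⟩ := x
  change #(Q.addToPart ha ht).parts = _
  rw [addToPart_parts,
    card_insert_of_notMem fun h => notMem_parts_of_mem ha Q (mem_insert_self a t)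
      (mem_of_mem_erase h),
    card_erase_add_one ht]

theorem card_card_parts_cons_succ (k : ℕ) :
    Fintype.card {P : Finpartition (s.cons a ha) // #P.parts = k + 1} =
      (k + 1) * Fintype.card {Q : Finpartition s // #Q.parts = k + 1} +
        Fintype.card {Q : Finpartition s // #Q.parts = k} := by
  classical
  let p : Finpartition s ⊕ (Σ Q : Finpartition s, {t // t ∈ Q.parts}) → Prop :=
    Sum.elim (fun Q => #Q.parts = k) (fun x => #x.1.parts = k + 1)
  calc Fintype.card {P : Finpartition (s.cons a ha) // #P.parts = k + 1}
      = Fintype.card {x // p x} := Fintype.card_congr <| ((consEquiv ha).symm.subtypeEquiv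
        fun x => by
          cases x <;> simp [p, card_parts_consEquiv_symm_inl, card_parts_consEquiv_symm_inr]).symm
    _ = Fintype.card {Q : Finpartition s // #Q.parts = k} +
        Fintype.card (Σ Q : {Q : Finpartition s // #Q.parts = k + 1}, {t // t ∈ Q.1.parts}) := by
      rw [Fintype.card_congr Equiv.subtypeSum, Fintype.card_sum]
      exact congrArg₂ (· + ·) (Fintype.card_congr (.refl _))
        (Fintype.card_congr (Equiv.subtypeSigmaEquiv
          (fun Q : Finpartition s => {t // t ∈ Q.parts}) (fun Q => #Q.parts = k + 1)))
    _ = _ := by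
      simp only [Fintype.card_sigma, Fintype.card_coe]
      rw [Finset.sum_congr rfl fun Q _ => Q.2, sum_const, card_univ, smul_eq_mul, add_comm,
        mul_comm]

end Finpartition

open Finpartition in
theorem card_finpartition_card_parts_eq_stirlingSecond {α : Type*} [DecidableEq α]
    (s : Finset α) (k : ℕ) :
    Fintype.card {P : Finpartition s // #P.parts = k} = Nat.stirlingSecond #s k := by
  induction s using Finset.cons_induction generalizing k with
  | empty =>
    have hparts (P : Finpartition (∅ : Finset α)) : #P.parts = 0 :=
      card_eq_zero.2 (parts_eq_empty_iff.2 bot_eq_empty.symm)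
    cases k <;> simp [hparts]
    exact Fintype.card_unique (α := Finpartition (⊥ : Finset α))
  | cons a s ha ih =>
    cases k with
    | zero =>
      rw [card_cons, Nat.stirlingSecond_succ_zero, Fintype.card_eq_zero_iff]
      exact ⟨fun P => (P.1.parts_nonempty (cons_ne_empty ha)).ne_empty (card_eq_zero.1 P.2)⟩
    | succ k =>
      rw [card_cons, Nat.stirlingSecond_succ_succ, card_card_parts_cons_succ ha, ih, ih]

def positiveCompositions (k n : ℕ) : Finset (Fin k → ℕ) :=
  (Nat.antidiagonalTuple k n).filter fun c => ∀ j, 0 < c j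

@[simp]
theorem mem_positiveCompositions {k n : ℕ} {c : Fin k → ℕ} :
    c ∈ positiveCompositions k n ↔ ∑ j, c j = n ∧ ∀ j, 0 < c j := by
  simp [positiveCompositions, Nat.mem_antidiagonalTuple]

section

variable {M : Type*} [AddCommMonoid M] {k n : ℕ}

theorem sum_positiveCompositions_filter_last_eq_one (f : (Fin (k + 1) → ℕ) → M) :
    ∑ c ∈ (positiveCompositions (k + 1) (n + 1)).filter (fun c => c (Fin.last k) = 1), f c =
      ∑ d ∈ positiveCompositions k n, f (Fin.snoc d 1) := by
  have hsnoc {c : Fin (k + 1) → ℕ} (hc : c (Fin.last k) = 1) : Fin.snoc (Fin.init c) 1 = c := by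
    simpa [hc] using Fin.snoc_init_self c
  refine sum_nbij' Fin.init (Fin.snoc · 1) ?_ ?_ ?_ ?_ ?_
  · intro c hc
    obtain ⟨⟨hsum, hpos⟩, hlast⟩ := by simpa [Fin.sum_univ_castSucc] using hc
    simp only [mem_positiveCompositions, Fin.init]
    exact ⟨by omega, fun j => hpos _⟩
  · intro d hd
    simp_all [Fin.sum_univ_castSucc, Fin.forall_fin_succ']
  · intro c hc
    exact hsnoc (mem_filter.1 hc).2
  · intro d _
    simp
  · intro c hc
    rw [hsnoc (mem_filter.1 hc).2]

theorem sum_positiveCompositions_filter_last_ne_one (f : (Fin (k + 1) → ℕ) → M) :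
    ∑ c ∈ (positiveCompositions (k + 1) (n + 1)).filter (fun c => ¬c (Fin.last k) = 1), f c =
      ∑ d ∈ positiveCompositions (k + 1) n, f (d + Pi.single (Fin.last k) 1) := by
  have hcancel {c : Fin (k + 1) → ℕ} (hc : 0 < c (Fin.last k)) :
      c - Pi.single (Fin.last k) 1 + Pi.single (Fin.last k) 1 = c := by
    funext j
    by_cases hj : j = Fin.last k
    · subst hj; simp; omega
    · simp [Pi.single_eq_of_ne hj]
  refine sum_nbij' (· - Pi.single (Fin.last k) 1) (· + Pi.single (Fin.last k) 1) ?_ ?_ ?_ ?_ ?_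
  · intro c hc
    simp only [mem_filter, mem_positiveCompositions] at hc ⊢
    simp_all [Fin.sum_univ_castSucc, Fin.forall_fin_succ']
    omega
  · intro d hd
    simp only [mem_filter, mem_positiveCompositions] at hd ⊢
    simp_all [Fin.sum_univ_castSucc, Fin.forall_fin_succ']
    omega
  · intro c hc
    exact hcancel ((mem_positiveCompositions.1 (mem_filter.1 hc).1).2 _)
  · intro d _
    simp
  · intro c hc
    rw [hcancel ((mem_positiveCompositions.1 (mem_filter.1 hc).1).2 _)]

theorem sum_positiveCompositions_succ_succ (f : (Fin (k + 1) → ℕ) → M) :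
    ∑ c ∈ positiveCompositions (k + 1) (n + 1), f c =
      ∑ d ∈ positiveCompositions k n, f (Fin.snoc d 1) +
        ∑ d ∈ positiveCompositions (k + 1) n, f (d + Pi.single (Fin.last k) 1) := by
  rw [← sum_filter_add_sum_filter_not _ fun c => c (Fin.last k) = 1,
    sum_positiveCompositions_filter_last_eq_one, sum_positiveCompositions_filter_last_ne_one]

end

theorem compositionWeight_snoc_one {k : ℕ} (d : Fin k → ℕ) :
    compositionWeight (Fin.snoc d 1 : Fin (k + 1) → ℕ) = compositionWeight d := by
  simp [compositionWeight, Fin.prod_univ_castSucc]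

theorem compositionWeight_add_single_last {k : ℕ} (d : Fin (k + 1) → ℕ)
    (hd : 0 < d (Fin.last k)) :
    compositionWeight (d + Pi.single (Fin.last k) 1) = (k + 1) * compositionWeight d := by
  simp only [compositionWeight, Fin.prod_univ_castSucc, Pi.add_apply,
    Pi.single_eq_of_ne (Fin.castSucc_ne_last _), Pi.single_eq_same, add_zero, Fin.val_last]
  rw [Nat.add_sub_cancel, ← Nat.sub_add_cancel hd, Nat.add_sub_cancel, pow_succ]
  ring

theorem stirlingSecond_eq_sum_compositionWeight (n k : ℕ) :
    Nat.stirlingSecond n k = ∑ c ∈ positiveCompositions k n, compositionWeight c := by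
  induction n generalizing k with
  | zero =>
    cases k with
    | zero => simp [positiveCompositions, compositionWeight]
    | succ k =>
      simp [positiveCompositions, Nat.antidiagonalTuple_zero_right, filter_singleton]
  | succ n ih =>
    cases k with
    | zero => simp [positiveCompositions, compositionWeight]
    | succ k =>
      rw [Nat.stirlingSecond_succ_succ, sum_positiveCompositions_succ_succ, ih, ih, add_comm, mul_sum]
      congr 1
      · simp only [compositionWeight_snoc_one]
      · refine sum_congr rfl fun d hd => ?_
        rw [compositionWeight_add_single_last d ((mem_positiveCompositions.1 hd).2 _)]

theorem stmt6_general (n k : ℕ) :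
    stirlingSecond n k =
      ∑ c ∈ (Finset.Nat.antidiagonalTuple k n).filter (fun c => ∀ j, 0 < c j),
        ∏ j : Fin k, ((j : ℕ) + 1) ^ (c j - 1) := by
  rw [stirlingSecond, card_finpartition_card_parts_eq_stirlingSecond, card_univ, Fintype.card_fin]
  exact stirlingSecond_eq_sum_compositionWeight n k

/-- For `k ≥ 1` and `n ≥ k`, `S(n,k)` equals the sum over all compositions
`n_1 + ⋯ + n_k = n` into `k` positive parts of `∏_{j=1}^k j^(n_j - 1)`. -/
theorem stmt6 (n k : ℕ) (hk : 1 ≤ k) (hn : k ≤ n) :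
    stirlingSecond n k =
      ∑ c ∈ (Finset.Nat.antidiagonalTuple k n).filter (fun c => ∀ j, 0 < c j),
        ∏ j : Fin k, ((j : ℕ) + 1) ^ (c j - 1) :=
  stmt6_general n k
end

section
/- In a finite distance magma R = {0 < r_1 < … < r_n}, there exists m ≥ 1 such that the m-fold sum m·r_1 satisfies m·r_1 = (m+1)·r_1, and then {r_1, …, r_k} where r_k = m·r_1 is an Archimedean class of R (in particular, the smallest Archimedean class consists of an initial segment of nonzero elements). -/
/-- A distance magma: a commutative magma with identity `0` and a compatible
total order satisfying positivity and monotonicity of addition. -/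
class DistanceMagma (R : Type*) extends LinearOrder R, Zero R where
  dadd : R → R → R
  dadd_comm : ∀ r s : R, dadd r s = dadd s r
  dadd_zero : ∀ r : R, dadd r 0 = r
  le_dadd : ∀ r s : R, r ≤ dadd r s
  dadd_le_dadd : ∀ {r s t u : R}, r ≤ t → s ≤ u → dadd r s ≤ dadd t u

/-- A distance monoid is an associative distance magma. -/
class DistanceMonoid (R : Type*) extends DistanceMagma R where
  dadd_assoc : ∀ r s t : R, dadd (dadd r s) t = dadd r (dadd s t)

open DistanceMagma

/-- `dnsmul m r` is the `m`-fold sum `r ⊕ ⋯ ⊕ r`. -/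
def dnsmul {R : Type*} [DistanceMagma R] : ℕ → R → R
  | 0, _ => 0
  | (m+1), r => dadd r (dnsmul m r)

/-- `S` is a set of nonzero, mutually Archimedean elements. -/
def MutArch {R : Type*} [DistanceMagma R] (S : Set R) : Prop :=
  (∀ r ∈ S, r ≠ 0) ∧ ∀ r ∈ S, ∀ s ∈ S, ∃ m : ℕ, 1 ≤ m ∧ r ≤ dnsmul m s

/-- An Archimedean class: a maximal set of nonzero, mutually Archimedean elements. -/
def IsArchClass {R : Type*} [DistanceMagma R] (S : Set R) : Prop :=
  S.Nonempty ∧ MutArch S ∧ ∀ T : Set R, MutArch T → S ⊆ T → T = S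

/-- Sum of a list of elements of a distance magma (right-nested). -/
def dsum {R : Type*} [DistanceMagma R] : List R → R
  | [] => 0
  | a :: l => dadd a (dsum l)

/-- The Archimedean condition at level `m`: for every chain
`r₀ ≤ r₁ ≤ ⋯ ≤ r_m`, `r₀ ⊕ r₁ ⊕ ⋯ ⊕ r_m = r₁ ⊕ ⋯ ⊕ r_m`. -/
def ArchAt (R : Type*) [DistanceMagma R] (m : ℕ) : Prop :=
  ∀ f : ℕ → R, (∀ i j, i ≤ j → f i ≤ f j) →
    dsum ((List.range (m+1)).map f) = dsum ((List.range m).map (fun i => f (i+1)))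

/-- `R` has Archimedean complexity `n`: `n` is the least level at which
the Archimedean condition holds. -/
def HasArch (R : Type*) [DistanceMagma R] (n : ℕ) : Prop :=
  ArchAt R n ∧ ∀ m : ℕ, ArchAt R m → n ≤ m

lemma dm_zero_le {R : Type*} [DistanceMagma R] (s : R) : (0:R) ≤ s := by
  have h := le_dadd (0:R) s
  rwa [dadd_comm, dadd_zero] at h

lemma dnsmul_le_succ {R : Type*} [DistanceMagma R] (k : ℕ) (r : R) :
    dnsmul k r ≤ dnsmul (k+1) r := by
  show dnsmul k r ≤ dadd r (dnsmul k r)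
  rw [dadd_comm]; exact le_dadd _ _

lemma dnsmul_mono_left {R : Type*} [DistanceMagma R] {k l : ℕ} (h : k ≤ l) (r : R) :
    dnsmul k r ≤ dnsmul l r := by
  induction l with
  | zero =>
      have : k = 0 := Nat.le_zero.mp h
      subst this; exact le_rfl
  | succ l ih =>
      rcases Nat.lt_or_ge k (l+1) with h' | h'
      · exact le_trans (ih (Nat.lt_succ_iff.mp h')) (dnsmul_le_succ l r)
      · have : k = l + 1 := le_antisymm h h'
        subst this; exact le_rfl

lemma dnsmul_mono_right {R : Type*} [DistanceMagma R] (k : ℕ) {r s : R} (h : r ≤ s) :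
    dnsmul k r ≤ dnsmul k s := by
  induction k with
  | zero => exact le_rfl
  | succ k ih => exact dadd_le_dadd h ih

lemma dnsmul_stab {R : Type*} [DistanceMagma R] {r : R} {m : ℕ}
    (h : dnsmul m r = dnsmul (m+1) r) : ∀ k, dnsmul (m + k) r = dnsmul m r := by
  intro k
  induction k with
  | zero => rfl
  | succ k ih =>
      show dadd r (dnsmul (m + k) r) = dnsmul m r
      rw [ih]
      exact h.symm

/-- In a finite distance magma with at least one nonzero element, letting `r`
be the smallest nonzero element, there is `m ≥ 1` with `m·r = (m+1)·r`, and
then the set of nonzero elements `≤ m·r` is an Archimedean class (the smallest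
one, an initial segment of the nonzero elements). -/
theorem stmt12 {R : Type*} [DistanceMagma R] [Fintype R] (r : R) (hr : r ≠ 0)
    (hmin : ∀ s : R, s ≠ 0 → r ≤ s) :
    ∃ m : ℕ, 1 ≤ m ∧ dnsmul m r = dnsmul (m + 1) r ∧
      IsArchClass {x : R | x ≠ 0 ∧ x ≤ dnsmul m r} := by
  -- find a stabilization point with m ≥ 1
  obtain ⟨x, y, hxy, hfeq⟩ :=
    Finite.exists_ne_map_eq_of_infinite (fun k : ℕ => dnsmul (k+1) r)
  -- WLOG x < y
  have key : ∃ m : ℕ, 1 ≤ m ∧ dnsmul m r = dnsmul (m+1) r := by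
    rcases lt_or_gt_of_ne hxy with h | h
    · refine ⟨x+1, Nat.succ_le_succ (Nat.zero_le _), le_antisymm (dnsmul_le_succ _ _) ?_⟩
      calc dnsmul (x+1+1) r ≤ dnsmul (y+1) r := dnsmul_mono_left (by omega) r
        _ = dnsmul (x+1) r := hfeq.symm
    · refine ⟨y+1, Nat.succ_le_succ (Nat.zero_le _), le_antisymm (dnsmul_le_succ _ _) ?_⟩
      calc dnsmul (y+1+1) r ≤ dnsmul (x+1) r := dnsmul_mono_left (by omega) r
        _ = dnsmul (y+1) r := hfeq
  obtain ⟨m, hm1, hstab⟩ := key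
  have hbound : ∀ k, dnsmul k r ≤ dnsmul m r := by
    intro k
    rcases Nat.le_total k m with h | h
    · exact dnsmul_mono_left h r
    · obtain ⟨j, rfl⟩ := Nat.exists_eq_add_of_le h
      exact le_of_eq (dnsmul_stab hstab j)
  have hrS : r ∈ {x : R | x ≠ 0 ∧ x ≤ dnsmul m r} := by
    refine ⟨hr, ?_⟩
    have : dnsmul 1 r ≤ dnsmul m r := dnsmul_mono_left hm1 r
    simpa [dnsmul, dadd_zero] using this
  refine ⟨m, hm1, hstab, ⟨r, hrS⟩, ⟨fun x hx => hx.1, ?_⟩, ?_⟩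
  · rintro x ⟨hx0, hxle⟩ s ⟨hs0, hsle⟩
    exact ⟨m, hm1, le_trans hxle (dnsmul_mono_right m (hmin s hs0))⟩
  · intro T hT hST
    refine Set.Subset.antisymm ?_ hST
    intro t ht
    have ht0 : t ≠ 0 := hT.1 t ht
    obtain ⟨k, hk1, hk⟩ := hT.2 t ht r (hST hrS)
    exact ⟨ht0, le_trans hk (hbound k)⟩
end

section
/- Let R be a finite distance monoid of Archimedean complexity 2 and let S = {s_1 < … < s_m} be an Archimedean class of R. Then s_i ⊕ s_j = s_m for all i, j ∈ [m]. -/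
open DistanceMagma

lemma dzero_add {R : Type*} [DistanceMagma R] (r : R) : dadd 0 r = r := by
  rw [dadd_comm]; exact dadd_zero r

lemma dzero_le {R : Type*} [DistanceMagma R] (r : R) : (0:R) ≤ r := by
  have := le_dadd (0:R) r
  rwa [dzero_add] at this

lemma dnsmul_le_dnsmul {R : Type*} [DistanceMagma R] {r s : R} (h : r ≤ s) (n : ℕ) :
    dnsmul n r ≤ dnsmul n s := by
  induction n with
  | zero => exact le_rfl
  | succ n ih => exact dadd_le_dadd h ih

lemma dnsmul_one {R : Type*} [DistanceMagma R] (r : R) : dnsmul 1 r = r := by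
  simp [dnsmul, dadd_zero]

lemma dnsmul_add' {R : Type*} [DistanceMonoid R] (a b : ℕ) (r : R) :
    dnsmul (a+b) r = dadd (dnsmul a r) (dnsmul b r) := by
  induction a with
  | zero => simp [dnsmul, dzero_add]
  | succ a ih =>
    rw [show a + 1 + b = (a + b) + 1 from by omega]
    show dadd r (dnsmul (a+b) r) = dadd (dadd r (dnsmul a r)) (dnsmul b r)
    rw [ih, DistanceMonoid.dadd_assoc]

lemma three_eq_two {R : Type*} [DistanceMagma R] (h : ArchAt R 2) (r : R) :
    dadd r (dadd r r) = dadd r r := by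
  have := h (fun _ => r) (fun i j _ => le_rfl)
  simpa [dsum, dadd_zero, List.range_succ] using this

lemma dnsmul_le_two {R : Type*} [DistanceMagma R] (h : ArchAt R 2) (r : R) (n : ℕ) :
    dnsmul n r ≤ dadd r r := by
  induction n with
  | zero => exact dzero_le _
  | succ n ih =>
    calc dnsmul (n+1) r = dadd r (dnsmul n r) := rfl
    _ ≤ dadd r (dadd r r) := dadd_le_dadd le_rfl ih
    _ = dadd r r := three_eq_two h r

/-- In a finite distance monoid of Archimedean complexity 2, the sum of any
two elements of an Archimedean class `S` is the greatest element of `S`. -/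
theorem stmt13 {R : Type*} [DistanceMonoid R] [Fintype R] (h2 : HasArch R 2)
    (S : Set R) (hS : IsArchClass S) (m : R) (hm : m ∈ S) (hmax : ∀ z ∈ S, z ≤ m)
    (x y : R) (hx : x ∈ S) (hy : y ∈ S) :
    DistanceMagma.dadd x y = m := by
  obtain ⟨hSne, ⟨hnz, hmut⟩, hSmax⟩ := hS
  -- x ⊕ y belongs to S
  have hxy_mem : dadd x y ∈ S := by
    have hT : MutArch (insert (dadd x y) S) := by
      constructor
      · rintro r (rfl | hr)
        · intro h0
          have hx0 : x ≤ 0 := h0 ▸ le_dadd x y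
          exact hnz x hx (le_antisymm hx0 (dzero_le x))
        · exact hnz r hr
      · rintro r (rfl | hr) s (rfl | hs)
        · exact ⟨1, le_rfl, by rw [dnsmul_one]⟩
        · obtain ⟨a, ha1, ha⟩ := hmut x hx s hs
          obtain ⟨b, hb1, hb⟩ := hmut y hy s hs
          exact ⟨a + b, le_trans ha1 (Nat.le_add_right a b), by
            rw [dnsmul_add']; exact dadd_le_dadd ha hb⟩
        · obtain ⟨k, hk1, hk⟩ := hmut r hr x hx
          exact ⟨k, hk1, le_trans hk (dnsmul_le_dnsmul (le_dadd x y) k)⟩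
        · exact hmut r hr s hs
    have := hSmax _ hT (Set.subset_insert _ _)
    rw [← this]; exact Set.mem_insert _ _
  have h1 : dadd x y ≤ m := hmax _ hxy_mem
  -- m ≤ x ⊕ y
  set w := min x y with hw
  have hwS : w ∈ S := by
    rcases min_cases x y with ⟨h, _⟩ | ⟨h, _⟩ <;> rw [hw, h] <;> assumption
  obtain ⟨k, hk1, hk⟩ := hmut m hm w hwS
  have h2' : m ≤ dadd x y :=
    calc m ≤ dnsmul k w := hk
    _ ≤ dadd w w := dnsmul_le_two h2.1 w k
    _ ≤ dadd x y := dadd_le_dadd (min_le_left x y) (min_le_right x y)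
  exact le_antisymm h1 h2'
end

section
/- Let R be a finite distance monoid with arch(R) = 2, and let S = {s_1 < … < s_p} and T = {t_1 < … < t_q} be Archimedean classes with S < T. Then for all u, v ∈ [p] and all j ∈ [q], s_u ⊕ t_j = s_v ⊕ t_j, and this common value lies in T and is ≥ t_j. -/
open DistanceMagma

/-!
Applied to the chain `x ≤ x ≤ t`, `arch(R) ≤ 2` says `x ⊕ x ⊕ t = x ⊕ t`, so every multiple
`m·x` with `m ≥ 1` is absorbed: `m·x ⊕ t = x ⊕ t` whenever `x ≤ t`. Mutually Archimedean
`u ≤ v` satisfy `v ≤ m·u`, hence `u ⊕ t ≤ v ⊕ t ≤ m·u ⊕ t = u ⊕ t`. Finally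
`t ≤ u ⊕ t ≤ t ⊕ t`, so `u ⊕ t` is Archimedean-equivalent to `t` and, by maximality of `T`,
lies in `T`.
-/

section Magma
variable {R : Type*} [DistanceMagma R]

lemma le_dadd_left (r s : R) : r ≤ dadd s r :=
  dadd_comm r s ▸ le_dadd r s

lemma zero_le_of_distanceMagma (r : R) : (0 : R) ≤ r := by
  simpa only [dadd_comm (0 : R) r, dadd_zero] using le_dadd (0 : R) r

lemma dnsmul_two (x : R) : dnsmul 2 x = dadd x x := by
  rw [dnsmul, dnsmul, dnsmul, dadd_zero]

lemma dnsmul_mono {a b : R} (h : a ≤ b) : ∀ m, dnsmul m a ≤ dnsmul m b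
  | 0 => le_rfl
  | m + 1 => dadd_le_dadd h (dnsmul_mono h m)

lemma ArchAt.dadd_dadd_of_le (h2 : ArchAt R 2) {x t : R} (h : x ≤ t) :
    dadd x (dadd x t) = dadd x t := by
  have hchain := h2 (fun i => if i ≤ 1 then x else t) (by
    intro i j hij
    split_ifs <;> first | exact le_rfl | exact h | omega)
  simpa [List.range_succ, dsum, dadd_zero] using hchain

end Magma

section Monoid
variable {R : Type*} [DistanceMonoid R]

open DistanceMonoid

lemma dnsmul_add (x : R) : ∀ m n, dnsmul (m + n) x = dadd (dnsmul m x) (dnsmul n x)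
  | 0, n => by rw [Nat.zero_add, dnsmul, dadd_comm, dadd_zero]
  | m + 1, n => by
      rw [Nat.add_right_comm, dnsmul, dnsmul, dnsmul_add x m n, dadd_assoc]

lemma dnsmul_dnsmul (x : R) (m : ℕ) : ∀ n, dnsmul n (dnsmul m x) = dnsmul (n * m) x
  | 0 => by rw [Nat.zero_mul, dnsmul, dnsmul]
  | n + 1 => by
      rw [dnsmul, dnsmul_dnsmul x m n, Nat.succ_mul, Nat.add_comm, dnsmul_add]

lemma ArchAt.dadd_dnsmul_of_le (h2 : ArchAt R 2) {x t : R} (h : x ≤ t) :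
    ∀ m, 1 ≤ m → dadd (dnsmul m x) t = dadd x t
  | 1, _ => by rw [dnsmul, dnsmul, dadd_zero]
  | m + 2, _ => by
      rw [dnsmul, dadd_assoc, h2.dadd_dnsmul_of_le h (m + 1) (by omega), h2.dadd_dadd_of_le h]

lemma ArchAt.dadd_eq_dadd_of_mutArch (h2 : ArchAt R 2) {S : Set R} (hS : MutArch S)
    {a b t : R} (ha : a ∈ S) (hb : b ∈ S) (hat : a ≤ t) (hbt : b ≤ t) :
    dadd a t = dadd b t := by
  wlog hab : a ≤ b generalizing a b
  · exact (this hb ha hbt hat (le_of_not_ge hab)).symm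
  obtain ⟨m, hm, hba⟩ := hS.2 b hb a ha
  apply le_antisymm (dadd_le_dadd hab le_rfl)
  calc dadd b t ≤ dadd (dnsmul m a) t := dadd_le_dadd hba le_rfl
    _ = dadd a t := h2.dadd_dnsmul_of_le hat m hm

lemma MutArch.insert_of_le_dnsmul {S : Set R} (hS : MutArch S) {s w : R} {n : ℕ}
    (hs : s ∈ S) (hsw : s ≤ w) (hws : w ≤ dnsmul n s) (hn : 1 ≤ n) :
    MutArch (insert w S) := by
  obtain ⟨hS0, hSarch⟩ := hS
  refine ⟨?_, ?_⟩
  · rintro r (rfl | hr)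
    · exact fun hr0 => hS0 s hs (le_antisymm (hr0 ▸ hsw) (zero_le_of_distanceMagma s))
    · exact hS0 r hr
  · rintro r (rfl | hr) r' (rfl | hr')
    · exact ⟨1, le_rfl, by rw [dnsmul, dnsmul, dadd_zero]⟩
    · obtain ⟨m, hm, hsr'⟩ := hSarch s hs r' hr'
      refine ⟨n * m, Nat.mul_pos hn hm, ?_⟩
      calc r ≤ dnsmul n s := hws
        _ ≤ dnsmul n (dnsmul m r') := dnsmul_mono hsr' n
        _ = dnsmul (n * m) r' := dnsmul_dnsmul r' m n
    · obtain ⟨m, hm, hrs⟩ := hSarch r hr s hs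
      exact ⟨m, hm, hrs.trans (dnsmul_mono hsw m)⟩
    · exact hSarch r hr r' hr'

lemma IsArchClass.mem_of_le_dnsmul {T : Set R} (hT : IsArchClass T) {t w : R} {n : ℕ}
    (ht : t ∈ T) (htw : t ≤ w) (hwt : w ≤ dnsmul n t) (hn : 1 ≤ n) : w ∈ T :=
  hT.2.2 _ (hT.2.1.insert_of_le_dnsmul ht htw hwt hn) (Set.subset_insert w T) ▸
    Set.mem_insert w T

end Monoid

theorem stmt14_general {R : Type*} [DistanceMonoid R] (h2 : HasArch R 2)
    (S T : Set R) (hS : IsArchClass S) (hT : IsArchClass T)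
    (hST : ∀ x ∈ S, ∀ y ∈ T, x < y)
    (u v : R) (hu : u ∈ S) (hv : v ∈ S) (t : R) (ht : t ∈ T) :
    DistanceMagma.dadd u t = DistanceMagma.dadd v t ∧
      DistanceMagma.dadd u t ∈ T ∧ t ≤ DistanceMagma.dadd u t := by
  have hut : u ≤ t := (hST u hu t ht).le
  have hle : t ≤ dadd u t := le_dadd_left t u
  have hle_two : dadd u t ≤ dnsmul 2 t := dnsmul_two t ▸ dadd_le_dadd hut le_rfl
  exact ⟨h2.1.dadd_eq_dadd_of_mutArch hS.2.1 hu hv hut (hST v hv t ht).le,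
    hT.mem_of_le_dnsmul ht hle hle_two (by norm_num), hle⟩

/-- In a finite distance monoid of Archimedean complexity 2, if `S < T` are
Archimedean classes, then for `u, v ∈ S` and `t ∈ T`, `u ⊕ t = v ⊕ t`, and
this common value lies in `T` and is `≥ t`. -/
theorem stmt14 {R : Type*} [DistanceMonoid R] [Fintype R] (h2 : HasArch R 2)
    (S T : Set R) (hS : IsArchClass S) (hT : IsArchClass T)
    (hST : ∀ x ∈ S, ∀ y ∈ T, x < y)
    (u v : R) (hu : u ∈ S) (hv : v ∈ S) (t : R) (ht : t ∈ T) :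
    DistanceMagma.dadd u t = DistanceMagma.dadd v t ∧
      DistanceMagma.dadd u t ∈ T ∧ t ≤ DistanceMagma.dadd u t :=
  stmt14_general h2 S T hS hT hST u v hu hv t ht
end

section
/- Let R be a finite distance monoid with arch(R) = 2, and let S, T be Archimedean classes with S < T, max S = s*. If s* ⊕ t = t' for some t ≤ t' in T, then s ⊕ u = t' for every s ∈ S and every u ∈ T with t ≤ u ≤ t', and moreover r ⊕ t' = t' for every r ∈ R with r ≤ s*. -/
open DistanceMagma

lemma arch2_absorb {R : Type*} [DistanceMonoid R] (h2 : ArchAt R 2)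
    {a b c : R} (hab : a ≤ b) (hbc : b ≤ c) :
    dadd a (dadd b c) = dadd b c := by
  have h := h2 (fun i => if i = 0 then a else if i = 1 then b else c) ?_
  · simpa [dsum, List.range_succ, DistanceMagma.dadd_zero] using h
  · intro i j hij
    rcases i with _ | _ | i <;> rcases j with _ | _ | j <;> simp at hij ⊢ <;>
      first | exact hab | exact hbc | exact hab.trans hbc | omega

lemma dnsmul_absorb {R : Type*} [DistanceMonoid R] (h2 : ArchAt R 2)
    {s u : R} (hsu : s ≤ u) : ∀ m : ℕ, dadd (dnsmul (m+1) s) u = dadd s u := by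
  intro m
  induction m with
  | zero => simp [dnsmul, DistanceMagma.dadd_zero]
  | succ m ih =>
      have h0 : dnsmul (m+2) s = dadd s (dnsmul (m+1) s) := rfl
      rw [h0, DistanceMonoid.dadd_assoc, ih, arch2_absorb h2 le_rfl hsu]

/-- In a finite distance monoid of Archimedean complexity 2 with Archimedean
classes `S < T` and `s*` the greatest element of `S`: if `s* ⊕ t = t'` with
`t ≤ t'` in `T`, then `s ⊕ u = t'` for every `s ∈ S` and every `u ∈ T` with
`t ≤ u ≤ t'`, and `r ⊕ t' = t'` for every `r ≤ s*`. -/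
theorem stmt15 {R : Type*} [DistanceMonoid R] [Fintype R] (h2 : HasArch R 2)
    (S T : Set R) (hS : IsArchClass S) (hT : IsArchClass T)
    (hST : ∀ x ∈ S, ∀ y ∈ T, x < y)
    (sstar : R) (hsS : sstar ∈ S) (hsmax : ∀ z ∈ S, z ≤ sstar)
    (t t' : R) (ht : t ∈ T) (ht' : t' ∈ T) (htt' : t ≤ t')
    (hsum : DistanceMagma.dadd sstar t = t') :
    (∀ s ∈ S, ∀ u ∈ T, t ≤ u → u ≤ t' → DistanceMagma.dadd s u = t') ∧
    (∀ r : R, r ≤ sstar → DistanceMagma.dadd r t' = t') := by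
  obtain ⟨hA2, _⟩ := h2
  have hs_lt_t : sstar < t := hST sstar hsS t ht
  have hkey : dadd sstar t' = t' := by
    rw [← hsum, ← DistanceMonoid.dadd_assoc]
    calc dadd (dadd sstar sstar) t = dadd sstar (dadd sstar t) := by
            rw [DistanceMonoid.dadd_assoc]
      _ = dadd sstar t := arch2_absorb hA2 le_rfl hs_lt_t.le
  constructor
  · intro s hs u hu htu hut'
    have hs_le : s ≤ sstar := hsmax s hs
    have hsu : s < u := hST s hs u hu
    obtain ⟨m, hm1, hms⟩ := hS.2.1.2 sstar hsS s hs
    obtain ⟨m, rfl⟩ : ∃ k, m = k + 1 := ⟨m - 1, by omega⟩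
    have h1 : dadd sstar u ≤ dadd s u := by
      calc dadd sstar u ≤ dadd (dnsmul (m+1) s) u :=
            DistanceMagma.dadd_le_dadd hms le_rfl
        _ = dadd s u := dnsmul_absorb hA2 hsu.le m
    have h2' : dadd s u ≤ dadd sstar u := DistanceMagma.dadd_le_dadd hs_le le_rfl
    have heq : dadd s u = dadd sstar u := le_antisymm h2' h1
    have hlow : t' ≤ dadd s u := by
      rw [heq, ← hsum]; exact DistanceMagma.dadd_le_dadd le_rfl htu
    have hhigh : dadd s u ≤ t' := by
      calc dadd s u ≤ dadd sstar t' := DistanceMagma.dadd_le_dadd hs_le hut'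
        _ = t' := hkey
    exact le_antisymm hhigh hlow
  · intro r hr
    have hlow : t' ≤ dadd r t' := by
      rw [DistanceMagma.dadd_comm]; exact DistanceMagma.le_dadd t' r
    have hhigh : dadd r t' ≤ t' := by
      calc dadd r t' ≤ dadd sstar t' := DistanceMagma.dadd_le_dadd hr le_rfl
        _ = t' := hkey
    exact le_antisymm hhigh hlow
end

section
/- Define R_n ⊆ ℕ recursively by R_2 = {0,1,2} and R_{n+1} = R_n ∪ {2M+1, 2M+1+r : r ∈ R_n∖{0}} where M = max R_n, with addition a ⊕ b = max{ r ∈ R_n : r ≤ a + b }. Then each R_n is a distance monoid with arch(R_n) = n, while the longest arithmetic progression {r, 2r, …, kr} of distinct elements in R_n has length at most 2. -/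
/-- `a ⊕ b`: the largest element of the carrier `S` not exceeding `a + b`. -/
def dop (S : Finset ℕ) (a b : ℕ) : ℕ :=
  WithBot.unbotD 0 ((S.filter (fun r => r ≤ a + b)).max)

/-- The recursively defined carriers: `Rcar 0 = R_2 = {0,1,2}` and
`R_{n+1} = R_n ∪ {2M + 1 + r : r ∈ R_n}` where `M = max R_n`
(note `{2M+1} ∪ {2M+1+r : r ∈ R_n∖{0}} = {2M+1+r : r ∈ R_n}`). -/
def Rcar : ℕ → Finset ℕ
  | 0 => {0, 1, 2}
  | (m + 1) => Rcar m ∪ (Rcar m).image (fun r => 2 * (WithBot.unbotD 0 (Rcar m).max) + 1 + r)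

/-- `m`-fold `⊕`-sum of `r` over the carrier `S`. -/
def dopN (S : Finset ℕ) : ℕ → ℕ → ℕ
  | 0, _ => 0
  | (m + 1), r => dop S r (dopN S m r)

/-- `⊕`-sum of a list over the carrier `S`. -/
def dopSum (S : Finset ℕ) : List ℕ → ℕ
  | [] => 0
  | a :: l => dop S a (dopSum S l)

/-- The Archimedean condition at level `m` for the carrier `S`: every chain
`r₀ ≤ ⋯ ≤ r_m` in `S` satisfies `r₀ ⊕ ⋯ ⊕ r_m = r₁ ⊕ ⋯ ⊕ r_m`. -/
def archAtOn (S : Finset ℕ) (m : ℕ) : Prop :=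
  ∀ f : ℕ → ℕ, (∀ i, f i ∈ S) → (∀ i j, i ≤ j → f i ≤ f j) →
    dopSum S ((List.range (m + 1)).map f) =
      dopSum S ((List.range m).map (fun i => f (i + 1)))

/-!
`R_{k+1}` is `R_k` together with the translate `c + R_k`, where `c = 2M + 1` and `M = max R_k`.
Since `c > 2M`, the sum of two old elements is floored inside `R_k`, a sum with exactly one new
element is the translate by `c` of the corresponding sum in `R_k`, and a sum of two new elements
exceeds `max R_{k+1} = 3M + 1` and is floored to the top. Every property is therefore proved by
induction on `k`, splitting each argument into old and new.

For the Archimedean index, a chain `a ≤ l₁ ≤ ⋯ ≤ lₘ ≤ z` is summed by folding onto its largest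
term `z`. If `z` is new, the whole sum is a translate by `c`, and folding the last `lᵢ` into the
seed gives a chain in `R_k` one term shorter; so each level costs exactly one more term. The
chain `1 ≤ 1` (where `1 ⊕ 1 = 2 ≠ 1`), extended at each level by the new translation constant `c`,
shows that no shorter chain length suffices.
-/

/-- The largest element of `S`, and `0` if `S` is empty. -/
def topIn (S : Finset ℕ) : ℕ := WithBot.unbotD 0 S.max

def floorIn (S : Finset ℕ) (x : ℕ) : ℕ := topIn (S.filter (· ≤ x))

section DistanceMonoid

variable {S : Finset ℕ}

theorem topIn_eq_max' (h : S.Nonempty) : topIn S = S.max' h := by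
  rw [topIn, ← Finset.coe_max' h, WithBot.unbotD_coe]

theorem le_topIn {s : ℕ} (hs : s ∈ S) : s ≤ topIn S := by
  rw [topIn_eq_max' ⟨s, hs⟩]
  exact S.le_max' s hs

theorem topIn_mem (h : S.Nonempty) : topIn S ∈ S := by
  rw [topIn_eq_max' h]
  exact S.max'_mem h

theorem topIn_eq {a : ℕ} (ha : a ∈ S) (h : ∀ s ∈ S, s ≤ a) : topIn S = a :=
  le_antisymm (h _ (topIn_mem ⟨a, ha⟩)) (le_topIn ha)

theorem floorIn_mem_filter (h0 : 0 ∈ S) (x : ℕ) : floorIn S x ∈ S.filter (· ≤ x) :=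
  topIn_mem ⟨0, by simp [h0]⟩

theorem floorIn_mem (h0 : 0 ∈ S) (x : ℕ) : floorIn S x ∈ S :=
  (Finset.mem_filter.1 (floorIn_mem_filter h0 x)).1

theorem floorIn_le (h0 : 0 ∈ S) (x : ℕ) : floorIn S x ≤ x :=
  (Finset.mem_filter.1 (floorIn_mem_filter h0 x)).2

theorem le_floorIn {s x : ℕ} (hs : s ∈ S) (h : s ≤ x) : s ≤ floorIn S x :=
  le_topIn (Finset.mem_filter.2 ⟨hs, h⟩)

theorem floorIn_eq {a x : ℕ} (ha : a ∈ S) (hax : a ≤ x) (h : ∀ s ∈ S, s ≤ x → s ≤ a) :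
    floorIn S x = a :=
  topIn_eq (Finset.mem_filter.2 ⟨ha, hax⟩) fun s hs => h s (Finset.mem_filter.1 hs).1
    (Finset.mem_filter.1 hs).2

theorem floorIn_of_mem {a : ℕ} (ha : a ∈ S) : floorIn S a = a :=
  floorIn_eq ha le_rfl fun _ _ h => h

theorem floorIn_mono (h0 : 0 ∈ S) : Monotone (floorIn S) := fun _ _ h =>
  le_floorIn (floorIn_mem h0 _) ((floorIn_le h0 _).trans h)

theorem floorIn_of_topIn_le (h0 : 0 ∈ S) {x : ℕ} (h : topIn S ≤ x) : floorIn S x = topIn S :=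
  floorIn_eq (topIn_mem ⟨0, h0⟩) h fun _ hs _ => le_topIn hs

theorem dop_eq_floorIn (a b : ℕ) : dop S a b = floorIn S (a + b) := rfl

theorem dop_comm (a b : ℕ) : dop S a b = dop S b a := by
  rw [dop_eq_floorIn, dop_eq_floorIn, Nat.add_comm]

theorem dop_mem (h0 : 0 ∈ S) (a b : ℕ) : dop S a b ∈ S := floorIn_mem h0 _

theorem dop_zero {a : ℕ} (ha : a ∈ S) : dop S a 0 = a := floorIn_of_mem ha

theorem le_dop_left {a : ℕ} (ha : a ∈ S) (b : ℕ) : a ≤ dop S a b :=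
  le_floorIn ha (Nat.le_add_right a b)

theorem le_dop_right {b : ℕ} (hb : b ∈ S) (a : ℕ) : b ≤ dop S a b :=
  le_floorIn hb (Nat.le_add_left b a)

theorem dop_mono (h0 : 0 ∈ S) {a b c d : ℕ} (hac : a ≤ c) (hbd : b ≤ d) :
    dop S a b ≤ dop S c d :=
  floorIn_mono h0 (Nat.add_le_add hac hbd)

theorem dop_of_topIn_le (h0 : 0 ∈ S) {a b : ℕ} (h : topIn S ≤ a + b) : dop S a b = topIn S :=
  floorIn_of_topIn_le h0 h

theorem dop_dop_of_topIn_le (h0 : 0 ∈ S) {a b c : ℕ} (ha : a ∈ S) (hb : b ∈ S)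
    (h : topIn S ≤ a + b ∨ topIn S ≤ a + c ∨ topIn S ≤ b + c) :
    dop S (dop S a b) c = topIn S := by
  apply dop_of_topIn_le h0
  rcases h with h | h | h
  · rw [dop_of_topIn_le h0 h]
    exact Nat.le_add_right _ _
  · exact h.trans (Nat.add_le_add_right (le_dop_left ha b) c)
  · exact h.trans (Nat.add_le_add_right (le_dop_right hb a) c)

theorem dop_assoc_of_topIn_le (h0 : 0 ∈ S) {a b c : ℕ} (ha : a ∈ S) (hb : b ∈ S) (hc : c ∈ S)
    (h : topIn S ≤ a + b ∨ topIn S ≤ a + c ∨ topIn S ≤ b + c) :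
    dop S (dop S a b) c = dop S a (dop S b c) := by
  rw [dop_dop_of_topIn_le h0 ha hb h, dop_comm a,
    dop_dop_of_topIn_le h0 hb hc (by omega)]

theorem foldr_dop_mem (h0 : 0 ∈ S) {z : ℕ} (hz : z ∈ S) (l : List ℕ) : l.foldr (dop S) z ∈ S := by
  cases l with
  | nil => exact hz
  | cons a l => exact dop_mem h0 a _

theorem foldr_dop_topIn (h0 : 0 ∈ S) (l : List ℕ) : l.foldr (dop S) (topIn S) = topIn S := by
  induction l with
  | nil => rfl
  | cons a l ih => rw [List.foldr_cons, ih, dop_of_topIn_le h0 (Nat.le_add_left _ _)]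

theorem dopSum_eq_foldr (l : List ℕ) : dopSum S l = l.foldr (dop S) 0 := by
  induction l with
  | nil => rfl
  | cons a l ih => rw [dopSum, ih, List.foldr_cons]

theorem dopSum_append_singleton {z : ℕ} (hz : z ∈ S) (l : List ℕ) :
    dopSum S (l ++ [z]) = l.foldr (dop S) z := by
  rw [dopSum_eq_foldr, List.foldr_concat, dop_zero hz]

/-- The Archimedean identity for a chain `a ≤ l₁ ≤ ⋯ ≤ lₘ ≤ z` in `S`, with the `⊕`-sum folded
onto its largest term `z`. -/
def AbsorbsChains (S : Finset ℕ) (m : ℕ) : Prop :=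
  ∀ a z (l : List ℕ), l.length = m → (∀ x ∈ a :: l ++ [z], x ∈ S) →
    (a :: l ++ [z]).Pairwise (· ≤ ·) → (a :: l).foldr (dop S) z = l.foldr (dop S) z

theorem List.Pairwise.append_pair_of_le {α : Type*} [Preorder α] {L : List α} {x z w : α}
    (h : (L ++ [x, z]).Pairwise (· ≤ ·)) (hxw : x ≤ w) : (L ++ [w]).Pairwise (· ≤ ·) := by
  simp only [List.pairwise_append, List.pairwise_cons, List.mem_cons, List.not_mem_nil, or_false,
    forall_eq, IsEmpty.forall_iff, implies_true, List.Pairwise.nil, and_self, and_true,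
    forall_eq_or_imp, true_and] at h ⊢
  exact ⟨h.1, fun a ha => (h.2.2 a ha).1.trans hxw⟩

theorem AbsorbsChains.succ (h0 : 0 ∈ S) {m : ℕ} (h : AbsorbsChains S m) :
    AbsorbsChains S (m + 1) := by
  intro a z l hl hS hchain
  obtain ⟨l, x, rfl⟩ := (List.eq_nil_or_concat' l).resolve_left (by rintro rfl; simp at hl)
  rw [← List.cons_append] at hS hchain ⊢
  rw [List.foldr_concat, List.foldr_concat]
  refine h a (dop S x z) l (by simpa using hl) (List.forall_mem_append.2
    ⟨fun y hy => hS y (List.mem_append_left _ (List.mem_append_left _ hy)),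
      List.forall_mem_singleton.2 (dop_mem h0 x z)⟩) ?_
  exact List.Pairwise.append_pair_of_le (by simpa using hchain) (le_dop_left (hS x (by simp)) z)

theorem List.map_range_add_two {α : Type*} (f : ℕ → α) (m : ℕ) :
    (List.range (m + 2)).map f = f 0 :: (List.range m).map (fun i => f (i + 1)) ++ [f (m + 1)] := by
  rw [List.range_succ, List.map_append, List.range_succ_eq_map, List.map_cons, List.map_map]
  rfl

theorem AbsorbsChains.archAtOn_succ {m : ℕ} (h : AbsorbsChains S m) : archAtOn S (m + 1) := by
  intro f hS hmono
  have hchain := List.map_range_add_two f m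
  have htail : (List.range (m + 1)).map (fun i => f (i + 1)) =
      (List.range m).map (fun i => f (i + 1)) ++ [f (m + 1)] := by
    rw [List.range_succ, List.map_append, List.map_singleton]
  rw [htail, hchain, dopSum_append_singleton (hS _), dopSum_append_singleton (hS _)]
  refine h _ _ _ (by simp) ?_ ?_
  · rw [← hchain]
    simp [hS]
  · rw [← hchain]
    exact List.pairwise_map.2 (List.pairwise_lt_range.imp fun hij => hmono _ _ hij.le)

theorem archAtOn.absorbsChains {m : ℕ} (h : archAtOn S (m + 1)) : AbsorbsChains S m := by
  intro a z l hl hS hchain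
  have hz : z ∈ S := hS z (by simp)
  set L := a :: l ++ [z]
  have hlen : L.length = m + 2 := by simp [L, hl]
  let f : ℕ → ℕ := fun i => L[min i (m + 1)]'(by omega)
  have hf : (List.range (m + 1 + 1)).map f = L := by
    refine List.ext_getElem (by simp [hlen]) fun i hi _ => ?_
    have : min i (m + 1) = i := by simp at hi; omega
    simp [f, this]
  have hf' : (List.range (m + 1)).map (fun i => f (i + 1)) = l ++ [z] := by
    refine List.ext_getElem (by simp [hl]) fun i hi _ => ?_
    have : min i m = i := by simp at hi; omega
    simp [f, this, L]
  have key := h f (fun i => hS _ (List.getElem_mem _))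
    fun i j hij => hchain.sortedLE.getElem_le_getElem_of_le (min_le_min_right _ hij)
  rwa [hf, hf', dopSum_append_singleton hz, dopSum_append_singleton hz] at key

theorem archAtOn_succ_iff {m : ℕ} : archAtOn S (m + 1) ↔ AbsorbsChains S m :=
  ⟨archAtOn.absorbsChains, AbsorbsChains.archAtOn_succ⟩

theorem not_archAtOn_zero (h1 : 1 ∈ S) : ¬archAtOn S 0 := fun h =>
  absurd (h (fun _ => 1) (fun _ => h1) fun _ _ _ => le_rfl) (by simp [dopSum, dop_zero h1])

end DistanceMonoid

theorem mem_Rcar_succ {k s : ℕ} :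
    s ∈ Rcar (k + 1) ↔ s ∈ Rcar k ∨ ∃ r ∈ Rcar k, s = 2 * topIn (Rcar k) + 1 + r := by
  rw [Rcar, Finset.mem_union, Finset.mem_image]
  simp only [topIn, eq_comm]

theorem Rcar_mono : Monotone Rcar :=
  monotone_nat_of_le_succ fun _ _ hs => mem_Rcar_succ.2 (Or.inl hs)

theorem zero_mem_Rcar (k : ℕ) : 0 ∈ Rcar k := Rcar_mono (Nat.zero_le k) (by decide)

theorem one_mem_Rcar (k : ℕ) : 1 ∈ Rcar k := Rcar_mono (Nat.zero_le k) (by decide)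

theorem two_mem_Rcar (k : ℕ) : 2 ∈ Rcar k := Rcar_mono (Nat.zero_le k) (by decide)

theorem topIn_Rcar_zero : topIn (Rcar 0) = 2 := topIn_eq (by decide) (by decide)

theorem topIn_Rcar_succ (k : ℕ) : topIn (Rcar (k + 1)) = 3 * topIn (Rcar k) + 1 := by
  have htop := topIn_mem ⟨0, zero_mem_Rcar k⟩
  refine topIn_eq (mem_Rcar_succ.2 (Or.inr ⟨_, htop, by ring⟩)) fun s hs => ?_
  rcases mem_Rcar_succ.1 hs with hs | ⟨r, hr, rfl⟩
  · linarith [le_topIn hs]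
  · linarith [le_topIn hr]

theorem mem_Rcar_of_mem_succ {k s : ℕ} (hs : s ∈ Rcar (k + 1)) (h : s ≤ 2 * topIn (Rcar k)) :
    s ∈ Rcar k := by
  rcases mem_Rcar_succ.1 hs with hs | ⟨r, _, rfl⟩
  · exact hs
  · omega

theorem floorIn_Rcar_succ_of_le {k x : ℕ} (hx : x ≤ 2 * topIn (Rcar k)) :
    floorIn (Rcar (k + 1)) x = floorIn (Rcar k) x :=
  floorIn_eq (Rcar_mono k.le_succ (floorIn_mem (zero_mem_Rcar k) x))
    (floorIn_le (zero_mem_Rcar k) x) fun _ hs hsx =>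
      le_floorIn (mem_Rcar_of_mem_succ hs (hsx.trans hx)) hsx

theorem floorIn_Rcar_succ_add (k x : ℕ) :
    floorIn (Rcar (k + 1)) (2 * topIn (Rcar k) + 1 + x) =
      2 * topIn (Rcar k) + 1 + floorIn (Rcar k) x := by
  have h0 := zero_mem_Rcar k
  refine floorIn_eq (mem_Rcar_succ.2 (Or.inr ⟨_, floorIn_mem h0 x, rfl⟩))
    (by linarith [floorIn_le h0 x]) fun s hs hsx => ?_
  rcases mem_Rcar_succ.1 hs with hs | ⟨r, hr, rfl⟩
  · linarith [le_topIn hs]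
  · linarith [le_floorIn hr (by omega : r ≤ x)]

theorem dop_Rcar_zero (a b : ℕ) : dop (Rcar 0) a b = min (a + b) 2 := by
  rw [dop_eq_floorIn]
  rcases le_or_gt 2 (a + b) with h | h
  · rw [floorIn_of_topIn_le (zero_mem_Rcar 0) (topIn_Rcar_zero ▸ h), topIn_Rcar_zero]
    omega
  · rw [floorIn_of_mem (by interval_cases (a + b) <;> decide)]
    omega

theorem dop_Rcar_succ_of_mem {k a b : ℕ} (ha : a ∈ Rcar k) (hb : b ∈ Rcar k) :
    dop (Rcar (k + 1)) a b = dop (Rcar k) a b :=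
  floorIn_Rcar_succ_of_le (by linarith [le_topIn ha, le_topIn hb])

theorem dop_Rcar_succ_add_right (k a b : ℕ) :
    dop (Rcar (k + 1)) a (2 * topIn (Rcar k) + 1 + b) =
      2 * topIn (Rcar k) + 1 + dop (Rcar k) a b := by
  rw [dop_eq_floorIn, dop_eq_floorIn, ← floorIn_Rcar_succ_add, Nat.add_left_comm]

theorem dop_Rcar_succ_add_left (k a b : ℕ) :
    dop (Rcar (k + 1)) (2 * topIn (Rcar k) + 1 + a) b =
      2 * topIn (Rcar k) + 1 + dop (Rcar k) a b := by
  rw [dop_comm, dop_Rcar_succ_add_right, dop_comm]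

theorem foldr_dop_Rcar_succ_of_mem {k z : ℕ} (hz : z ∈ Rcar k) {l : List ℕ}
    (hl : ∀ x ∈ l, x ∈ Rcar k) : l.foldr (dop (Rcar (k + 1))) z = l.foldr (dop (Rcar k)) z := by
  induction l with
  | nil => rfl
  | cons a l ih =>
    rw [List.foldr_cons, List.foldr_cons, ih fun x hx => hl x (List.mem_cons_of_mem a hx)]
    exact dop_Rcar_succ_of_mem (hl a List.mem_cons_self) (foldr_dop_mem (zero_mem_Rcar k) hz l)

theorem foldr_dop_Rcar_succ_add (k z : ℕ) (l : List ℕ) :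
    l.foldr (dop (Rcar (k + 1))) (2 * topIn (Rcar k) + 1 + z) =
      2 * topIn (Rcar k) + 1 + l.foldr (dop (Rcar k)) z := by
  induction l with
  | nil => rfl
  | cons a l ih => rw [List.foldr_cons, List.foldr_cons, ih, dop_Rcar_succ_add_right]

theorem dop_Rcar_assoc : ∀ (k : ℕ) {a b c : ℕ}, a ∈ Rcar k → b ∈ Rcar k → c ∈ Rcar k →
    dop (Rcar k) (dop (Rcar k) a b) c = dop (Rcar k) a (dop (Rcar k) b c)
  | 0, a, b, c, ha, hb, hc => by
    have := le_topIn ha; have := le_topIn hb; have := le_topIn hc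
    simp only [topIn_Rcar_zero, dop_Rcar_zero] at *
    omega
  | k + 1, a, b, c, ha, hb, hc => by
    have h0 := zero_mem_Rcar k
    have htop := topIn_Rcar_succ k
    rcases mem_Rcar_succ.1 ha with ha' | ⟨a, ha', rfl⟩ <;>
    rcases mem_Rcar_succ.1 hb with hb' | ⟨b, hb', rfl⟩ <;>
    rcases mem_Rcar_succ.1 hc with hc' | ⟨c, hc', rfl⟩
    · rw [dop_Rcar_succ_of_mem ha' hb', dop_Rcar_succ_of_mem (dop_mem h0 a b) hc',
        dop_Rcar_succ_of_mem hb' hc', dop_Rcar_succ_of_mem ha' (dop_mem h0 b c),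
        dop_Rcar_assoc k ha' hb' hc']
    · rw [dop_Rcar_succ_of_mem ha' hb', dop_Rcar_succ_add_right, dop_Rcar_succ_add_right,
        dop_Rcar_succ_add_right, dop_Rcar_assoc k ha' hb' hc']
    · rw [dop_Rcar_succ_add_right, dop_Rcar_succ_add_left, dop_Rcar_succ_add_left,
        dop_Rcar_succ_add_right, dop_Rcar_assoc k ha' hb' hc']
    · -- two new arguments: both sides are floored to the top
      exact dop_assoc_of_topIn_le (zero_mem_Rcar _) ha hb hc (by omega)
    · rw [dop_Rcar_succ_add_left, dop_Rcar_succ_add_left, dop_Rcar_succ_of_mem hb' hc',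
        dop_Rcar_succ_add_left, dop_Rcar_assoc k ha' hb' hc']
    all_goals exact dop_assoc_of_topIn_le (zero_mem_Rcar _) ha hb hc (by omega)

theorem dop_self_dop_self_of_lt : ∀ (k : ℕ) {r : ℕ}, r ∈ Rcar k → r < dop (Rcar k) r r →
    dop (Rcar k) r (dop (Rcar k) r r) = dop (Rcar k) r r
  | 0, r, hr, h => by
    have := le_topIn hr
    simp only [topIn_Rcar_zero, dop_Rcar_zero] at *
    omega
  | k + 1, r, hr, h => by
    rcases mem_Rcar_succ.1 hr with hr' | ⟨s, hs, rfl⟩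
    · rw [dop_Rcar_succ_of_mem hr' hr'] at h ⊢
      rw [dop_Rcar_succ_of_mem hr' (dop_mem (zero_mem_Rcar k) r r)]
      exact dop_self_dop_self_of_lt k hr' h
    · have := topIn_Rcar_succ k
      rw [dop_of_topIn_le (zero_mem_Rcar _) (by omega),
        dop_of_topIn_le (zero_mem_Rcar _) (by omega)]

theorem forall_mem_Rcar_of_pairwise {k z : ℕ} {L : List ℕ} (hz : z ∈ Rcar k)
    (hS : ∀ x ∈ L ++ [z], x ∈ Rcar (k + 1)) (hchain : (L ++ [z]).Pairwise (· ≤ ·)) :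
    ∀ x ∈ L, x ∈ Rcar k := fun x hx =>
  mem_Rcar_of_mem_succ (hS x (List.mem_append_left _ hx))
    ((((List.pairwise_append.1 hchain).2.2 x hx z (List.mem_singleton_self z)).trans
      (le_topIn hz)).trans (Nat.le_mul_of_pos_left _ two_pos))

theorem absorbsChains_Rcar : ∀ k : ℕ, AbsorbsChains (Rcar k) (k + 1)
  | 0 => by
    intro a z l hl hS hchain
    obtain ⟨x, rfl⟩ := List.length_eq_one_iff.1 hl
    have := le_topIn (hS z (by simp))
    simp only [topIn_Rcar_zero, List.foldr_cons, List.foldr_nil, dop_Rcar_zero] at *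
    simp only [List.cons_append, List.nil_append, List.pairwise_cons, List.mem_cons,
      List.not_mem_nil, or_false, forall_eq_or_imp, forall_eq, IsEmpty.forall_iff, implies_true,
      List.Pairwise.nil, and_self, and_true] at hchain
    omega
  | k + 1 => by
    intro a z l hl hS hchain
    have h0 := zero_mem_Rcar k
    rcases mem_Rcar_succ.1 (hS z (by simp)) with hz | ⟨s, hs, rfl⟩
    · have hold := forall_mem_Rcar_of_pairwise hz hS hchain
      rw [foldr_dop_Rcar_succ_of_mem hz hold,
        foldr_dop_Rcar_succ_of_mem hz fun x hx => hold x (List.mem_cons_of_mem a hx)]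
      exact (absorbsChains_Rcar k).succ h0 a z l hl
        (List.forall_mem_append.2 ⟨hold, List.forall_mem_singleton.2 hz⟩) hchain
    · rw [foldr_dop_Rcar_succ_add, foldr_dop_Rcar_succ_add]
      congr 1
      obtain ⟨l, x, rfl⟩ := (List.eq_nil_or_concat' l).resolve_left (by rintro rfl; simp at hl)
      rw [← List.cons_append, List.foldr_concat, List.foldr_concat]
      rw [← List.cons_append] at hS hchain
      rcases mem_Rcar_succ.1 (hS x (by simp)) with hx | ⟨r, hr, rfl⟩
      · have hold := forall_mem_Rcar_of_pairwise hx (fun y hy => hS y (List.mem_append_left _ hy))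
          (List.pairwise_append.1 hchain).1
        refine absorbsChains_Rcar k a (dop (Rcar k) x s) l (by simpa using hl)
          (List.forall_mem_append.2 ⟨hold, List.forall_mem_singleton.2 (dop_mem h0 x s)⟩) ?_
        exact List.Pairwise.append_pair_of_le (by simpa using hchain) (le_dop_left hx s)
      · have := topIn_Rcar_succ k
        rw [dop_of_topIn_le h0 (by omega), foldr_dop_topIn h0, foldr_dop_topIn h0]

theorem exists_chain_not_absorbed_Rcar : ∀ (k : ℕ) {m : ℕ}, m ≤ k →
    ∃ (a z : ℕ) (l : List ℕ), l.length = m ∧ (∀ x ∈ a :: l ++ [z], x ∈ Rcar k) ∧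
      (a :: l ++ [z]).Pairwise (· ≤ ·) ∧ (a :: l).foldr (dop (Rcar k)) z ≠ l.foldr (dop (Rcar k)) z
  | k, 0, _ => ⟨1, 1, [], rfl, by simp [one_mem_Rcar], by simp, by
      simp [dop_eq_floorIn, floorIn_of_mem (two_mem_Rcar k)]⟩
  | 0, _ + 1, hm => absurd hm (by omega)
  | k + 1, m + 1, hm => by
    obtain ⟨a, z, l, hl, hS, hchain, hne⟩ := exists_chain_not_absorbed_Rcar k (by omega : m ≤ k)
    have hz : z ∈ Rcar k := hS z (by simp)
    have hnew : 2 * topIn (Rcar k) + 1 + 0 ∈ Rcar (k + 1) :=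
      mem_Rcar_succ.2 (Or.inr ⟨0, zero_mem_Rcar k, rfl⟩)
    refine ⟨a, 2 * topIn (Rcar k) + 1 + 0, l ++ [z], by simp [hl], ?_, ?_, ?_⟩
    · rw [← List.cons_append]
      exact List.forall_mem_append.2
        ⟨fun x hx => Rcar_mono k.le_succ (hS x hx), List.forall_mem_singleton.2 hnew⟩
    · rw [← List.cons_append]
      refine List.pairwise_append.2 ⟨hchain, List.pairwise_singleton _ _, fun x hx y hy => ?_⟩
      rw [List.mem_singleton.1 hy]
      linarith [le_topIn (hS x hx)]
    · rw [← List.cons_append, List.foldr_concat, List.foldr_concat, dop_Rcar_succ_add_right,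
        dop_zero hz, foldr_dop_Rcar_succ_add, foldr_dop_Rcar_succ_add]
      simpa using hne

theorem archAtOn_Rcar_iff (k m : ℕ) : archAtOn (Rcar k) m ↔ k + 2 ≤ m := by
  rcases m with _ | m
  · simp [not_archAtOn_zero (one_mem_Rcar k)]
  rw [archAtOn_succ_iff]
  constructor
  · intro h
    by_contra hlt
    obtain ⟨a, z, l, hl, hS, hchain, hne⟩ := exists_chain_not_absorbed_Rcar k (by omega : m ≤ k)
    exact hne (h a z l hl hS hchain)
  · intro h
    obtain ⟨j, rfl⟩ : ∃ j, m = k + 1 + j := ⟨m - (k + 1), by omega⟩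
    induction j with
    | zero => exact absorbsChains_Rcar k
    | succ j ih => exact (ih (by omega)).succ (zero_mem_Rcar k)

/-- For every `n ≥ 2`, the carrier `R_n = Rcar (n-2)` with operation `dop` is a
distance monoid (closed, commutative, associative, with identity `0`,
positivity and monotone addition) of Archimedean complexity exactly `n`, yet
its longest arithmetic progression `{r < 2r < ⋯ < kr}` has length at most `2`. -/
theorem stmt16 (n : ℕ) (hn : 2 ≤ n) :
    (∀ a ∈ Rcar (n - 2), ∀ b ∈ Rcar (n - 2), dop (Rcar (n - 2)) a b ∈ Rcar (n - 2)) ∧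
    (0 : ℕ) ∈ Rcar (n - 2) ∧
    (∀ a b : ℕ, dop (Rcar (n - 2)) a b = dop (Rcar (n - 2)) b a) ∧
    (∀ a ∈ Rcar (n - 2), dop (Rcar (n - 2)) a 0 = a) ∧
    (∀ a ∈ Rcar (n - 2), ∀ b ∈ Rcar (n - 2), a ≤ dop (Rcar (n - 2)) a b) ∧
    (∀ a b c d : ℕ, a ∈ Rcar (n - 2) → b ∈ Rcar (n - 2) → c ∈ Rcar (n - 2) →
      d ∈ Rcar (n - 2) → a ≤ c → b ≤ d →
      dop (Rcar (n - 2)) a b ≤ dop (Rcar (n - 2)) c d) ∧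
    (∀ a ∈ Rcar (n - 2), ∀ b ∈ Rcar (n - 2), ∀ c ∈ Rcar (n - 2),
      dop (Rcar (n - 2)) (dop (Rcar (n - 2)) a b) c =
        dop (Rcar (n - 2)) a (dop (Rcar (n - 2)) b c)) ∧
    (archAtOn (Rcar (n - 2)) n ∧ ∀ m, archAtOn (Rcar (n - 2)) m → n ≤ m) ∧
    (∀ r ∈ Rcar (n - 2),
      ¬(dopN (Rcar (n - 2)) 1 r < dopN (Rcar (n - 2)) 2 r ∧
        dopN (Rcar (n - 2)) 2 r < dopN (Rcar (n - 2)) 3 r)) := by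
  obtain ⟨k, rfl⟩ : ∃ k, n = k + 2 := ⟨n - 2, by omega⟩
  rw [Nat.add_sub_cancel]
  have h0 := zero_mem_Rcar k
  refine ⟨fun a _ b _ => dop_mem h0 a b, h0, dop_comm, fun a ha => dop_zero ha,
    fun a ha b _ => le_dop_left ha b, fun a b c d _ _ _ _ => dop_mono h0,
    fun a ha b hb c hc => dop_Rcar_assoc k ha hb hc,
    ⟨(archAtOn_Rcar_iff k _).2 le_rfl, fun m => (archAtOn_Rcar_iff k m).1⟩, fun r hr => ?_⟩
  rintro ⟨h12, h23⟩
  simp only [dopN, dop_zero hr] at h12 h23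
  rw [dop_self_dop_self_of_lt k hr h12] at h23
  exact lt_irrefl _ h23
end
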